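/- arXiv:2502.07816 — 9 statements merged into one kernel-verified Lean document; each statement's English description precedes it below -/
import Mathlib

section
/- Let N ≥ 1, 0 < ν < N, R > 1, C₁ > 0 and β₀ > 0 with β₀ ≤ N − ν. Let g : ℝ^N → [0,∞) be measurable with g(x) ≥ C₁|x|^{−β₀} for all x with |x| ≥ R. Then for every x ∈ ℝ^N with |x| ≥ R one has (|x|^{-ν} ∗ g)(x) = ∫_{ℝ^N} g(y)/|x−y|^{ν} dy = +∞. -/
open MeasureTheory
open Metric

/-- Lemma 2.6 (i), infinite case: if `g ≥ C₁|x|^{-β₀}` outside `B_R` with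
`β₀ ≤ N - ν`, then the Riesz convolution `|x|^{-ν} ∗ g` is `+∞` outside `B_R`. -/
theorem stmt_0 (N : ℕ) (hN : 1 ≤ N) (ν R C₁ β₀ : ℝ)
    (hν0 : 0 < ν) (hνN : ν < N) (hR : 1 < R) (hC₁ : 0 < C₁)
    (hβ₀0 : 0 < β₀) (hβ₀ : β₀ ≤ (N : ℝ) - ν)
    (g : EuclideanSpace ℝ (Fin N) → ℝ) (hgm : Measurable g) (hg0 : ∀ y, 0 ≤ g y)
    (hglow : ∀ y : EuclideanSpace ℝ (Fin N), R ≤ ‖y‖ → C₁ * ‖y‖ ^ (-β₀) ≤ g y) :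
    ∀ x : EuclideanSpace ℝ (Fin N), R ≤ ‖x‖ →
      ∫⁻ y, ENNReal.ofReal (g y / ‖x - y‖ ^ ν) = ⊤ := by
  intro x hx
  have hr1 : (1:ℝ) < ‖x‖ := hR.trans_le hx
  have hrpos : (0:ℝ) < ‖x‖ := by linarith
  set c : ℝ := C₁ / 2 ^ ν with hc
  have hcpos : 0 < c := div_pos hC₁ (Real.rpow_pos_of_pos two_pos ν)
  let e : EuclideanSpace ℝ (Fin N) := EuclideanSpace.single (⟨0, hN⟩ : Fin N) (1:ℝ)
  have he : ‖e‖ = 1 := by simp [e, EuclideanSpace.norm_single]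
  set B : ℕ → Set (EuclideanSpace ℝ (Fin N)) :=
    fun n => ball ((3 * (‖x‖ * 2 ^ n)) • e) (‖x‖ * 2 ^ n) with hBdef
  have hspos : ∀ n : ℕ, (0:ℝ) < ‖x‖ * 2 ^ n := fun n => by positivity
  -- norm bounds on each ball
  have hB : ∀ n : ℕ, ∀ y ∈ B n,
      2 * (‖x‖ * 2 ^ n) < ‖y‖ ∧ ‖y‖ < 4 * (‖x‖ * 2 ^ n) := by
    intro n y hy
    set s := ‖x‖ * 2 ^ n with hs
    have hs0 : 0 < s := hspos n
    have hz : ‖(3 * s) • e‖ = 3 * s := by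
      rw [norm_smul, he, mul_one, Real.norm_eq_abs, abs_of_pos (by linarith)]
    have hd : ‖y - (3 * s) • e‖ < s := by rwa [mem_ball, dist_eq_norm] at hy
    constructor
    · have h1 : ‖(3 * s) • e‖ - ‖y‖ ≤ ‖(3 * s) • e - y‖ := norm_sub_norm_le _ _
      rw [norm_sub_rev] at h1
      linarith
    · have h1 : ‖y‖ - ‖(3 * s) • e‖ ≤ ‖y - (3 * s) • e‖ := norm_sub_norm_le _ _
      linarith
  -- pairwise disjoint
  have hdisj : Pairwise (Function.onFun Disjoint B) := by
    intro m n hmn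
    wlog h : m < n generalizing m n
    · exact (this hmn.symm (by omega)).symm
    rw [Function.onFun, Set.disjoint_left]
    intro y hym hyn
    have h4 := (hB m y hym).2
    have h2 := (hB n y hyn).1
    have hpow : (2:ℝ) ^ (m + 1) ≤ 2 ^ n := pow_le_pow_right₀ one_le_two (by omega)
    have : 4 * (‖x‖ * 2 ^ m) ≤ 2 * (‖x‖ * 2 ^ n) := by
      have : (4:ℝ) * 2 ^ m = 2 * 2 ^ (m+1) := by ring
      nlinarith [hrpos]
    linarith
  -- pointwise lower bound
  have hpoint : ∀ n : ℕ, ∀ y ∈ B n,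
      ENNReal.ofReal (c * (4 * (‖x‖ * 2 ^ n)) ^ (-(N:ℝ))) ≤
        ENNReal.ofReal (g y / ‖x - y‖ ^ ν) := by
    intro n y hy
    obtain ⟨hy1, hy2⟩ := hB n y hy
    set s := ‖x‖ * 2 ^ n with hs
    have hs0 : 0 < s := hspos n
    have hxs : ‖x‖ ≤ s := by
      rw [hs]; nlinarith [one_le_pow₀ (one_le_two (α := ℝ)) (n := n)]
    have hxy : ‖x‖ < ‖y‖ := by linarith
    have hyR : R ≤ ‖y‖ := by linarith
    have hy1' : (1:ℝ) < ‖y‖ := by linarith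
    have hxy_pos : 0 < ‖x - y‖ := by
      rw [norm_sub_pos_iff]
      intro h; rw [h] at hxy; exact lt_irrefl _ hxy
    apply ENNReal.ofReal_le_ofReal
    have hub : ‖x - y‖ ^ ν ≤ (2:ℝ) ^ ν * ‖y‖ ^ ν := by
      have h1 : ‖x - y‖ ≤ 2 * ‖y‖ := by
        have := norm_sub_le x y; linarith
      calc ‖x - y‖ ^ ν ≤ (2 * ‖y‖) ^ ν :=
            Real.rpow_le_rpow (norm_nonneg _) h1 hν0.le
        _ = 2 ^ ν * ‖y‖ ^ ν := Real.mul_rpow (by norm_num) (norm_nonneg _)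
    have hlow : C₁ * ‖y‖ ^ (-β₀) / (2 ^ ν * ‖y‖ ^ ν) ≤ g y / ‖x - y‖ ^ ν :=
      div_le_div₀ (hg0 y) (hglow y hyR) (Real.rpow_pos_of_pos hxy_pos ν) hub
    have heq : C₁ * ‖y‖ ^ (-β₀) / (2 ^ ν * ‖y‖ ^ ν) = c * ‖y‖ ^ (-β₀ - ν) := by
      rw [hc, Real.rpow_sub (by linarith : (0:ℝ) < ‖y‖)]
      field_simp
    have h2 : ‖y‖ ^ (-(N:ℝ)) ≤ ‖y‖ ^ (-β₀ - ν) :=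
      Real.rpow_le_rpow_of_exponent_le hy1'.le (by linarith)
    have h3 : (4 * s) ^ (-(N:ℝ)) ≤ ‖y‖ ^ (-(N:ℝ)) :=
      Real.rpow_le_rpow_of_nonpos (by linarith) hy2.le (neg_nonpos.mpr (Nat.cast_nonneg N))
    calc c * (4 * s) ^ (-(N:ℝ)) ≤ c * ‖y‖ ^ (-β₀ - ν) := by
          apply mul_le_mul_of_nonneg_left (le_trans h3 h2) hcpos.le
      _ = C₁ * ‖y‖ ^ (-β₀) / (2 ^ ν * ‖y‖ ^ ν) := heq.symm
      _ ≤ g y / ‖x - y‖ ^ ν := hlow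
  -- volume of balls
  set v := volume (ball (0 : EuclideanSpace ℝ (Fin N)) 1) with hv
  have hv0 : v ≠ 0 := (measure_ball_pos volume 0 one_pos).ne'
  have hvol : ∀ n : ℕ, volume (B n) = ENNReal.ofReal ((‖x‖ * 2 ^ n) ^ (N:ℕ)) * v := by
    intro n
    haveI : Nontrivial (EuclideanSpace ℝ (Fin N)) :=
      nontrivial_of_ne e 0 (by intro h; rw [h, norm_zero] at he; norm_num at he)
    rw [hBdef]
    rw [Measure.addHaar_ball volume _ (hspos n).le, finrank_euclideanSpace_fin]
  set κ : ENNReal := ENNReal.ofReal (c * 4 ^ (-(N:ℝ))) * v with hκ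
  have hκ0 : κ ≠ 0 := by
    apply mul_ne_zero _ hv0
    simp only [ne_eq, ENNReal.ofReal_eq_zero, not_le]
    positivity
  have hint : ∀ n : ℕ, κ ≤ ∫⁻ y in B n, ENNReal.ofReal (g y / ‖x - y‖ ^ ν) := by
    intro n
    set s := ‖x‖ * 2 ^ n with hs
    have hs0 : 0 < s := hspos n
    have hkey : c * (4 * s) ^ (-(N:ℝ)) * s ^ (N:ℕ) = c * 4 ^ (-(N:ℝ)) := by
      have h1 : s ^ (-(N:ℝ)) * s ^ (N:ℝ) = 1 := by
        rw [← Real.rpow_add hs0]; norm_num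
      rw [← Real.rpow_natCast s N, Real.mul_rpow (by norm_num : (0:ℝ) ≤ 4) hs0.le]
      linear_combination (c * (4:ℝ) ^ (-(N:ℝ))) * h1
    calc κ = ENNReal.ofReal (c * (4 * s) ^ (-(N:ℝ))) * volume (B n) := by
          rw [hvol n, ← hs, ← mul_assoc, ← ENNReal.ofReal_mul (by positivity), hkey, hκ]
      _ = ∫⁻ _ in B n, ENNReal.ofReal (c * (4 * s) ^ (-(N:ℝ))) := by
          rw [setLIntegral_const, mul_comm]
      _ ≤ ∫⁻ y in B n, ENNReal.ofReal (g y / ‖x - y‖ ^ ν) :=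
          setLIntegral_mono' measurableSet_ball (hpoint n)
  have hfinal : (⊤ : ENNReal) ≤ ∫⁻ y, ENNReal.ofReal (g y / ‖x - y‖ ^ ν) := by
    calc (⊤ : ENNReal) = ∑' _ : ℕ, κ := (ENNReal.tsum_const_eq_top_of_ne_zero hκ0).symm
      _ ≤ ∑' n : ℕ, ∫⁻ y in B n, ENNReal.ofReal (g y / ‖x - y‖ ^ ν) :=
          ENNReal.tsum_le_tsum hint
      _ = ∫⁻ y in ⋃ n, B n, ENNReal.ofReal (g y / ‖x - y‖ ^ ν) :=
          (lintegral_iUnion (fun n => measurableSet_ball) hdisj _).symm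
      _ ≤ ∫⁻ y, ENNReal.ofReal (g y / ‖x - y‖ ^ ν) := setLIntegral_le_lintegral _ _
  exact top_le_iff.mp hfinal
end

section
/- Let N ≥ 1, 0 < ν < N, R > 1, C₁ > 0 and β₀ > N − ν. Let g : ℝ^N → [0,∞) be measurable with g(x) ≥ C₁|x|^{−β₀} for all x with |x| ≥ R. Then there exists a constant C > 0, depending only on N, ν, β₀ and C₁, such that (|x|^{-ν} ∗ g)(x) ≥ C|x|^{N−ν−β₀} for all x with |x| ≥ R. -/
open MeasureTheory

open Metric

lemma key_arith (r ω C₁ ν β₀ : ℝ) (hr : 0 < r) (N : ℕ) :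
    C₁ * 3 ^ (-β₀) * 2 ^ (-ν) * ω * r ^ ((N : ℝ) - ν - β₀) =
      C₁ * (3 * r) ^ (-β₀) / (2 * r) ^ ν * (r ^ N * ω) := by
  rw [Real.mul_rpow (by norm_num) hr.le, Real.mul_rpow (by norm_num) hr.le,
    ← Real.rpow_natCast r N, sub_sub, Real.rpow_sub hr, Real.rpow_add hr,
    Real.rpow_neg hr.le β₀, Real.rpow_neg (by norm_num : (0:ℝ) ≤ 2) ν,
    Real.rpow_neg (by norm_num : (0:ℝ) ≤ 3) β₀]
  have h2 : (2:ℝ) ^ ν ≠ 0 := (Real.rpow_pos_of_pos (by norm_num) ν).ne'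
  have h3 : (3:ℝ) ^ β₀ ≠ 0 := (Real.rpow_pos_of_pos (by norm_num) β₀).ne'
  have hrν : r ^ ν ≠ 0 := (Real.rpow_pos_of_pos hr ν).ne'
  have hrβ : r ^ β₀ ≠ 0 := (Real.rpow_pos_of_pos hr β₀).ne'
  field_simp

/-- Lemma 2.6 (i), finite case: if `g ≥ C₁|x|^{-β₀}` outside `B_R` with
`β₀ > N - ν`, then `(|x|^{-ν} ∗ g)(x) ≥ C|x|^{N-ν-β₀}` for `|x| ≥ R`, where
`C > 0` depends only on `N, ν, β₀, C₁`. -/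
theorem stmt_1 (N : ℕ) (hN : 1 ≤ N) (ν C₁ β₀ : ℝ)
    (hν0 : 0 < ν) (hνN : ν < N) (hC₁ : 0 < C₁)
    (hβ₀ : (N : ℝ) - ν < β₀) :
    ∃ C : ℝ, 0 < C ∧ ∀ R : ℝ, 1 < R →
      ∀ g : EuclideanSpace ℝ (Fin N) → ℝ, Measurable g → (∀ y, 0 ≤ g y) →
      (∀ y : EuclideanSpace ℝ (Fin N), R ≤ ‖y‖ → C₁ * ‖y‖ ^ (-β₀) ≤ g y) →
      ∀ x : EuclideanSpace ℝ (Fin N), R ≤ ‖x‖ →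
        ENNReal.ofReal (C * ‖x‖ ^ ((N : ℝ) - ν - β₀)) ≤
          ∫⁻ y, ENNReal.ofReal (g y / ‖x - y‖ ^ ν) := by
  set ω : ℝ := (volume (ball (0 : EuclideanSpace ℝ (Fin N)) 1)).toReal with hω
  have hballpos : 0 < volume (ball (0 : EuclideanSpace ℝ (Fin N)) 1) :=
    measure_ball_pos _ _ one_pos
  have hballfin : volume (ball (0 : EuclideanSpace ℝ (Fin N)) 1) ≠ ⊤ :=
    (measure_ball_lt_top).ne
  have hωpos : 0 < ω := ENNReal.toReal_pos hballpos.ne' hballfin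
  refine ⟨C₁ * 3 ^ (-β₀) * 2 ^ (-ν) * ω, by positivity, ?_⟩
  intro R hR g hgm hg0 hgl x hx
  have hr : (0:ℝ) < ‖x‖ := lt_of_lt_of_le (by linarith) hx
  set r := ‖x‖ with hrdef
  set s := ball ((2:ℝ) • x) r with hs
  set c : ℝ := C₁ * (3 * r) ^ (-β₀) / (2 * r) ^ ν with hc
  have hcpos : 0 < c := by
    apply div_pos (mul_pos hC₁ (Real.rpow_pos_of_pos (by linarith) _))
      (Real.rpow_pos_of_pos (by linarith) _)
  -- pointwise bound on s
  have hpt : ∀ y ∈ s, ENNReal.ofReal c ≤ ENNReal.ofReal (g y / ‖x - y‖ ^ ν) := by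
    intro y hy
    rw [hs, mem_ball, dist_eq_norm] at hy
    have hy' : ‖(2:ℝ) • x - y‖ < r := by rw [norm_sub_rev]; exact hy
    have h2x : ‖(2:ℝ) • x‖ = 2 * r := by rw [norm_smul]; simp [hrdef]
    have hylb : r ≤ ‖y‖ := by
      have := norm_sub_norm_le ((2:ℝ) • x) y
      rw [h2x] at this
      linarith [hy']
    have hyub : ‖y‖ ≤ 3 * r := by
      have := norm_le_norm_add_norm_sub' y ((2:ℝ) • x)
      rw [h2x] at this
      linarith [hy']
    have hxy_ub : ‖x - y‖ ≤ 2 * r := by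
      have h1 : x - y = (x - (2:ℝ) • x) + ((2:ℝ) • x - y) := by abel
      have h2 : ‖x - (2:ℝ) • x‖ = r := by
        have : x - (2:ℝ) • x = -x := by module
        rw [this, norm_neg]
      calc ‖x - y‖ ≤ ‖x - (2:ℝ) • x‖ + ‖(2:ℝ) • x - y‖ := by rw [h1]; exact norm_add_le _ _
        _ ≤ 2 * r := by rw [h2]; linarith [hy']
    have hxy_pos : 0 < ‖x - y‖ := by
      have h2 : ‖(2:ℝ) • x - x‖ = r := by
        have : (2:ℝ) • x - x = x := by module
        rw [this]
      have := norm_sub_norm_le ((2:ℝ) • x - x) ((2:ℝ) • x - y)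
      have h3 : (2:ℝ) • x - x - ((2:ℝ) • x - y) = y - x := by abel
      rw [h3, h2, ← norm_neg (y - x), neg_sub] at this
      linarith [hy']
    apply ENNReal.ofReal_le_ofReal
    rw [hc]
    have hnum : C₁ * (3 * r) ^ (-β₀) ≤ g y := by
      calc C₁ * (3 * r) ^ (-β₀) ≤ C₁ * ‖y‖ ^ (-β₀) := by
            apply mul_le_mul_of_nonneg_left _ hC₁.le
            exact Real.rpow_le_rpow_of_nonpos (lt_of_lt_of_le hr hylb) hyub (by linarith)
        _ ≤ g y := hgl y (le_trans hx hylb)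
    exact div_le_div₀ (hg0 y) hnum (Real.rpow_pos_of_pos hxy_pos ν)
      (Real.rpow_le_rpow hxy_pos.le hxy_ub hν0.le)
  have hmeas : Measurable fun y : EuclideanSpace ℝ (Fin N) =>
      ENNReal.ofReal (g y / ‖x - y‖ ^ ν) := by
    apply Measurable.ennreal_ofReal
    have hcont : Continuous fun y : EuclideanSpace ℝ (Fin N) => ‖x - y‖ ^ ν :=
      (Real.continuous_rpow_const hν0.le).comp ((continuous_const.sub continuous_id).norm)
    exact hgm.div hcont.measurable
  calc ENNReal.ofReal (C₁ * 3 ^ (-β₀) * 2 ^ (-ν) * ω * r ^ ((N : ℝ) - ν - β₀))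
      = ENNReal.ofReal c * volume s := by
        rw [hs, Measure.addHaar_ball_of_pos _ _ hr, finrank_euclideanSpace_fin,
          ← ENNReal.ofReal_toReal hballfin, ← hω,
          ← ENNReal.ofReal_mul (by positivity : (0:ℝ) ≤ r ^ N),
          ← ENNReal.ofReal_mul hcpos.le]
        exact congrArg ENNReal.ofReal (key_arith r ω C₁ ν β₀ hr N)
    _ = ∫⁻ _ in s, ENNReal.ofReal c := by rw [setLIntegral_const]
    _ ≤ ∫⁻ y in s, ENNReal.ofReal (g y / ‖x - y‖ ^ ν) :=
        setLIntegral_mono hmeas hpt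
    _ ≤ ∫⁻ y, ENNReal.ofReal (g y / ‖x - y‖ ^ ν) := setLIntegral_le_lintegral _ _
end

section
/- Let N ≥ 1, 0 < ν < N, 0 < R₀ < 1 < R, C₁, C₂ > 0, β₁ < N and β₂ > N − ν. Let g : ℝ^N → [0,∞) be measurable with g(x) ≤ C₁|x|^{−β₁} for 0 < |x| < R₀ and g(x) ≤ C₂/(1 + |x|^{β₂}) for |x| ≥ R₀. Then there exists a constant C̄ > 0, depending on N, ν, β₁, β₂, C₁, C₂, R and R₀, such that (|x|^{-ν} ∗ g)(x) ≤ C̄ for all x with R₀/4 ≤ |x| ≤ 3R. -/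
open MeasureTheory Metric
open scoped ENNReal

section Aux

variable {N : ℕ}

private lemma pow_rpow_comm' {x : ℝ} (hx : 0 ≤ x) (k : ℕ) (t : ℝ) : (x ^ k) ^ t = (x ^ t) ^ k := by
  rw [← Real.rpow_natCast x k, ← Real.rpow_mul hx, mul_comm, Real.rpow_mul hx, Real.rpow_natCast]

private lemma aux_nontrivial (hN : 1 ≤ N) : Nontrivial (EuclideanSpace ℝ (Fin N)) := by
  haveI : Nonempty (Fin N) := Fin.pos_iff_nonempty.mp hN
  infer_instance

/-- Finiteness of `∫_{B_r} ‖z‖^{-s}` for `0 ≤ s < N`. -/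
private lemma aux_ball_rpow_lt_top (hN : 1 ≤ N) {s r : ℝ} (hs0 : 0 ≤ s) (hsN : s < N)
    (hr : 0 < r) :
    ∫⁻ z in Metric.ball (0 : EuclideanSpace ℝ (Fin N)) r,
      ENNReal.ofReal (‖z‖ ^ (-s)) < ⊤ := by
  haveI := aux_nontrivial hN
  set E := EuclideanSpace ℝ (Fin N)
  set A : ℕ → Set E := fun k => Metric.ball 0 (r / 2 ^ k) \ Metric.ball 0 (r / 2 ^ (k + 1))
    with hA
  have hsub : Metric.ball (0 : E) r ⊆ {0} ∪ ⋃ k, A k := by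
    intro z hz
    rcases eq_or_ne z 0 with h0 | h0
    · exact Or.inl h0
    · right
      have hz0 : 0 < ‖z‖ := norm_pos_iff.mpr h0
      have hzr : ‖z‖ < r := by simpa using hz
      have hex : ∃ k : ℕ, r / 2 ^ (k + 1) ≤ ‖z‖ := by
        obtain ⟨k, hk⟩ := exists_pow_lt_of_lt_one (div_pos hz0 hr) (by norm_num : (1 : ℝ) / 2 < 1)
        refine ⟨k, ?_⟩
        have h1 : ((1 : ℝ) / 2) ^ (k + 1) ≤ (1 / 2) ^ k :=
          pow_le_pow_of_le_one (by norm_num) (by norm_num) (Nat.le_succ k)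
        have h2 : r * ((1 : ℝ) / 2) ^ (k + 1) ≤ r * (‖z‖ / r) :=
          mul_le_mul_of_nonneg_left (h1.trans hk.le) hr.le
        calc r / 2 ^ (k + 1) = r * ((1 : ℝ) / 2) ^ (k + 1) := by
              rw [div_pow]; ring
          _ ≤ r * (‖z‖ / r) := h2
          _ = ‖z‖ := by field_simp
      have h1 : r / 2 ^ (Nat.find hex + 1) ≤ ‖z‖ := Nat.find_spec hex
      have h2 : ‖z‖ < r / 2 ^ (Nat.find hex) := by
        rcases Nat.eq_zero_or_pos (Nat.find hex) with h | h
        · rw [h]; simpa using hzr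
        · obtain ⟨m, hm⟩ := Nat.exists_eq_succ_of_ne_zero h.ne'
          have := Nat.find_min hex (by omega : m < Nat.find hex)
          push_neg at this
          rw [hm]
          simpa using this
      exact Set.mem_iUnion.2 ⟨Nat.find hex,
        ⟨by simpa using h2, by simpa using not_lt.2 h1⟩⟩
  have hVfin : volume (Metric.ball (0 : E) 1) < ⊤ := measure_ball_lt_top
  set V : ℝ≥0∞ := volume (Metric.ball (0 : E) 1) with hV
  set q : ℝ := ((1 : ℝ) / 2) ^ ((N : ℝ) - s) with hq
  have hq0 : 0 ≤ q := Real.rpow_nonneg (by norm_num) _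
  have hq1 : q < 1 :=
    Real.rpow_lt_one (by norm_num) (by norm_num) (by linarith)
  set C : ℝ := 2 ^ s * r ^ ((N : ℝ) - s) with hC
  have hterm : ∀ k : ℕ, ∫⁻ z in A k, ENNReal.ofReal (‖z‖ ^ (-s)) ≤
      (ENNReal.ofReal C * V) * (ENNReal.ofReal q) ^ k := by
    intro k
    have hbk : (0 : ℝ) < r / 2 ^ k := by positivity
    have hak : (0 : ℝ) < r / 2 ^ (k + 1) := by positivity
    have hmono : ∫⁻ z in A k, ENNReal.ofReal (‖z‖ ^ (-s)) ≤
        ∫⁻ _ in A k, ENNReal.ofReal ((r / 2 ^ (k + 1)) ^ (-s)) := by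
      refine setLIntegral_mono' (measurableSet_ball.diff measurableSet_ball) ?_
      intro z hz
      refine ENNReal.ofReal_le_ofReal ?_
      refine Real.rpow_le_rpow_of_nonpos hak ?_ (neg_nonpos.mpr hs0)
      have := hz.2
      simpa [not_lt] using this
    have hmeasA : volume (A k) ≤ volume (Metric.ball (0 : E) (r / 2 ^ k)) :=
      measure_mono Set.diff_subset
    have hballvol : volume (Metric.ball (0 : E) (r / 2 ^ k)) =
        ENNReal.ofReal ((r / 2 ^ k) ^ N) * V := by
      rw [Measure.addHaar_ball volume 0 hbk.le, finrank_euclideanSpace_fin]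
    have hreal : (r / 2 ^ (k + 1)) ^ (-s) * (r / 2 ^ k) ^ N = C * q ^ k := by
      set u : ℝ := r / 2 ^ k with hu
      have hu0 : 0 < u := hbk
      have e1 : r / 2 ^ (k + 1) = u / 2 := by
        rw [hu, pow_succ]; ring
      have e2 : (u / 2) ^ (-s) = u ^ (-s) * 2 ^ s := by
        rw [Real.div_rpow hu0.le (by norm_num), Real.rpow_neg (by norm_num : (0:ℝ) ≤ 2),
          div_eq_mul_inv, inv_inv]
      have e3 : u ^ (-s) * (u ^ N) = u ^ ((N : ℝ) - s) := by
        rw [← Real.rpow_natCast u N, ← Real.rpow_add hu0]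
        ring_nf
      have e4 : u ^ ((N : ℝ) - s) = r ^ ((N : ℝ) - s) * q ^ k := by
        rw [hu, div_eq_mul_inv, ← inv_pow, hq]
        rw [Real.mul_rpow hr.le (by positivity)]
        congr 1
        rw [pow_rpow_comm' (by norm_num : (0:ℝ) ≤ 2⁻¹) k ((N:ℝ) - s)]
        norm_num
      calc (r / 2 ^ (k + 1)) ^ (-s) * (r / 2 ^ k) ^ N
          = (u ^ (-s) * 2 ^ s) * u ^ N := by rw [e1, e2]
        _ = 2 ^ s * (u ^ (-s) * u ^ N) := by ring
        _ = 2 ^ s * (r ^ ((N : ℝ) - s) * q ^ k) := by rw [e3, e4]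
        _ = C * q ^ k := by rw [hC]; ring
    calc ∫⁻ z in A k, ENNReal.ofReal (‖z‖ ^ (-s))
        ≤ ∫⁻ _ in A k, ENNReal.ofReal ((r / 2 ^ (k + 1)) ^ (-s)) := hmono
      _ = ENNReal.ofReal ((r / 2 ^ (k + 1)) ^ (-s)) * volume (A k) := setLIntegral_const _ _
      _ ≤ ENNReal.ofReal ((r / 2 ^ (k + 1)) ^ (-s)) *
            (ENNReal.ofReal ((r / 2 ^ k) ^ N) * V) := by
          rw [← hballvol]; exact mul_le_mul_right hmeasA _
      _ = ENNReal.ofReal ((r / 2 ^ (k + 1)) ^ (-s) * (r / 2 ^ k) ^ N) * V := by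
          rw [ENNReal.ofReal_mul (by positivity), mul_assoc]
      _ ≤ ENNReal.ofReal (C * q ^ k) * V := by
          exact mul_le_mul_left (ENNReal.ofReal_le_ofReal hreal.le) V
      _ = (ENNReal.ofReal C * V) * (ENNReal.ofReal q) ^ k := by
          rw [ENNReal.ofReal_mul (by positivity), ENNReal.ofReal_pow hq0]; ring
  calc ∫⁻ z in Metric.ball (0 : E) r, ENNReal.ofReal (‖z‖ ^ (-s))
      ≤ ∫⁻ z in ({0} ∪ ⋃ k, A k : Set E), ENNReal.ofReal (‖z‖ ^ (-s)) :=
        lintegral_mono_set hsub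
    _ ≤ (∫⁻ z in ({0} : Set E), ENNReal.ofReal (‖z‖ ^ (-s))) +
        ∫⁻ z in (⋃ k, A k : Set E), ENNReal.ofReal (‖z‖ ^ (-s)) := lintegral_union_le _ _ _
    _ ≤ 0 + ∑' k, ∫⁻ z in A k, ENNReal.ofReal (‖z‖ ^ (-s)) := by
        gcongr
        · exact le_of_eq (setLIntegral_measure_zero _ _ (measure_singleton 0))
        · exact lintegral_iUnion_le _ _
    _ ≤ 0 + ∑' k, (ENNReal.ofReal C * V) * (ENNReal.ofReal q) ^ k := by
        gcongr with k
        exact hterm k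
    _ = (ENNReal.ofReal C * V) * (1 - ENNReal.ofReal q)⁻¹ := by
        rw [zero_add, ENNReal.tsum_mul_left, ENNReal.tsum_geometric]
    _ < ⊤ := by
        refine ENNReal.mul_lt_top (ENNReal.mul_lt_top ENNReal.ofReal_lt_top hVfin) ?_
        rw [ENNReal.inv_lt_top]
        rw [tsub_pos_iff_lt]
        exact lt_of_lt_of_le (ENNReal.ofReal_lt_one.mpr hq1) le_rfl

end Aux

set_option maxHeartbeats 2000000 in
/-- Lemma 2.6 (ii), intermediate estimate: under the two-sided decay assumptions on `g`,
`(|x|^{-ν} ∗ g)(x) ≤ C̄` for `R₀/4 ≤ |x| ≤ 3R`, with `C̄` depending on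
`N, ν, β₁, β₂, C₁, C₂, R, R₀`. -/
theorem stmt_4 (N : ℕ) (hN : 1 ≤ N) (ν β₁ β₂ C₁ C₂ R₀ R : ℝ)
    (hν0 : 0 < ν) (hνN : ν < N) (hC₁ : 0 < C₁) (hC₂ : 0 < C₂)
    (hR₀0 : 0 < R₀) (hR₀1 : R₀ < 1) (hR : 1 < R) (hβ₁ : β₁ < N) (hβ₂ : (N : ℝ) - ν < β₂) :
    ∃ Cbar : ℝ, 0 < Cbar ∧
      ∀ g : EuclideanSpace ℝ (Fin N) → ℝ, Measurable g → (∀ y, 0 ≤ g y) →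
      (∀ y : EuclideanSpace ℝ (Fin N), 0 < ‖y‖ → ‖y‖ < R₀ → g y ≤ C₁ * ‖y‖ ^ (-β₁)) →
      (∀ y : EuclideanSpace ℝ (Fin N), R₀ ≤ ‖y‖ → g y ≤ C₂ / (1 + ‖y‖ ^ β₂)) →
      ∀ x : EuclideanSpace ℝ (Fin N), R₀ / 4 ≤ ‖x‖ → ‖x‖ ≤ 3 * R →
        ∫⁻ y, ENNReal.ofReal (g y / ‖x - y‖ ^ ν) ≤ ENNReal.ofReal Cbar := by
  haveI := aux_nontrivial hN
  set E := EuclideanSpace ℝ (Fin N)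
  have hN0 : (0 : ℝ) < N := by exact_mod_cast hN
  set β' : ℝ := max β₁ 0 with hβ'
  have hβ'0 : 0 ≤ β' := le_max_right _ _
  have hβ'N : β' < N := max_lt hβ₁ hN0
  have hr8 : (0 : ℝ) < R₀ / 8 := by linarith
  -- the three basic finite quantities
  set I₁ : ℝ≥0∞ := ∫⁻ z in Metric.ball (0 : E) (R₀ / 8), ENNReal.ofReal (‖z‖ ^ (-ν)) with hI₁
  have hI₁fin : I₁ < ⊤ := aux_ball_rpow_lt_top hN hν0.le hνN hr8
  set I₂ : ℝ≥0∞ := ∫⁻ y in Metric.ball (0 : E) (6 * R), ENNReal.ofReal (‖y‖ ^ (-β')) with hI₂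
  have hI₂fin : I₂ < ⊤ := aux_ball_rpow_lt_top hN hβ'0 hβ'N (by linarith)
  set J : ℝ≥0∞ := ∫⁻ y : E, ENNReal.ofReal ((1 + ‖y‖) ^ (-(β₂ + ν))) with hJ
  have hJfin : J < ⊤ := by
    refine finite_integral_one_add_norm ?_
    rw [finrank_euclideanSpace_fin]
    linarith
  set V6 : ℝ≥0∞ := volume (Metric.ball (0 : E) (6 * R)) with hV6
  have hV6fin : V6 < ⊤ := measure_ball_lt_top
  -- the constants
  set M : ℝ := max (C₁ * (R₀ / 8) ^ (-β')) C₂ with hM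
  have hM0 : 0 < M := lt_of_lt_of_le hC₂ (le_max_right _ _)
  set c₂ : ℝ := (R₀ / 8) ^ (-ν) with hc₂
  have hc₂0 : 0 < c₂ := Real.rpow_pos_of_pos hr8 _
  set c₃ : ℝ := C₂ * 2 ^ ν * 2 ^ (β₂ + ν) with hc₃
  have hc₃0 : 0 < c₃ := by
    have := Real.rpow_pos_of_pos (by norm_num : (0:ℝ) < 2) ν
    have := Real.rpow_pos_of_pos (by norm_num : (0:ℝ) < 2) (β₂ + ν)
    positivity
  set T : ℝ≥0∞ := ENNReal.ofReal M * I₁ +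
      ENNReal.ofReal c₂ * (ENNReal.ofReal C₁ * I₂ + ENNReal.ofReal C₂ * V6) +
      ENNReal.ofReal c₃ * J with hT
  have hTfin : T < ⊤ := by
    rw [hT]
    refine ENNReal.add_lt_top.2 ⟨ENNReal.add_lt_top.2 ⟨?_, ?_⟩, ?_⟩
    · exact ENNReal.mul_lt_top ENNReal.ofReal_lt_top hI₁fin
    · exact ENNReal.mul_lt_top ENNReal.ofReal_lt_top
        (ENNReal.add_lt_top.2 ⟨ENNReal.mul_lt_top ENNReal.ofReal_lt_top hI₂fin,
          ENNReal.mul_lt_top ENNReal.ofReal_lt_top hV6fin⟩)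
    · exact ENNReal.mul_lt_top ENNReal.ofReal_lt_top hJfin
  refine ⟨T.toReal + 1, by positivity, ?_⟩
  intro g hgmeas hg0 hgin hgout x hx1 hx2
  -- basic a.e. facts
  have hae0 : ∀ᵐ y : E ∂volume, y ≠ 0 := by
    rw [ae_iff]
    simpa [Set.setOf_eq_eq_singleton'] using measure_singleton (0 : E)
  -- the pointwise bound `g ≤ h` away from 0, where `h y = C₁ ‖y‖^(-β') + C₂`
  have hgh : ∀ y : E, y ≠ 0 → g y ≤ C₁ * ‖y‖ ^ (-β') + C₂ := by
    intro y hy0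
    have hy0' : 0 < ‖y‖ := norm_pos_iff.mpr hy0
    rcases lt_or_ge ‖y‖ R₀ with hcase | hcase
    · have h1 : g y ≤ C₁ * ‖y‖ ^ (-β₁) := hgin y hy0' hcase
      have h2 : ‖y‖ ^ (-β₁) ≤ ‖y‖ ^ (-β') := by
        apply Real.rpow_le_rpow_of_exponent_ge hy0' (by linarith)
        simp [hβ', neg_le_neg_iff, le_max_left]
      nlinarith [Real.rpow_nonneg (norm_nonneg y) (-β'), hC₁.le, hC₂.le]
    · have h1 : g y ≤ C₂ / (1 + ‖y‖ ^ β₂) := hgout y hcase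
      have h2 : C₂ / (1 + ‖y‖ ^ β₂) ≤ C₂ := by
        apply div_le_self hC₂.le
        have := Real.rpow_nonneg (norm_nonneg y) β₂
        linarith
      have h3 : 0 ≤ C₁ * ‖y‖ ^ (-β') := by positivity
      linarith
  -- region decomposition
  set S₁ : Set E := Metric.ball x (R₀ / 8) with hS₁
  set S₂ : Set E := Metric.ball (0 : E) (6 * R) \ S₁ with hS₂
  set S₃ : Set E := (Metric.ball (0 : E) (6 * R))ᶜ with hS₃
  have hcover : (Set.univ : Set E) ⊆ S₁ ∪ S₂ ∪ S₃ := by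
    intro y _
    by_cases h3 : y ∈ Metric.ball (0 : E) (6 * R)
    · by_cases h1 : y ∈ S₁
      · exact Or.inl (Or.inl h1)
      · exact Or.inl (Or.inr ⟨h3, h1⟩)
    · exact Or.inr h3
  -- Estimate on S₁
  have hest₁ : ∫⁻ y in S₁, ENNReal.ofReal (g y / ‖x - y‖ ^ ν) ≤ ENNReal.ofReal M * I₁ := by
    have hptwise : ∀ᵐ y : E ∂volume, y ∈ S₁ →
        ENNReal.ofReal (g y / ‖x - y‖ ^ ν) ≤ ENNReal.ofReal (M * ‖x - y‖ ^ (-ν)) := by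
      filter_upwards [hae0] with y hy0 hyS
      have hxy : ‖x - y‖ < R₀ / 8 := by
        rw [hS₁] at hyS
        have := mem_ball_iff_norm.mp hyS
        rwa [← norm_sub_rev y x]
      have hylb : R₀ / 8 ≤ ‖y‖ := by
        have h1 : ‖x‖ - ‖x - y‖ ≤ ‖y‖ := by
          have := norm_sub_norm_le x y
          linarith [norm_sub_norm_le x y]
        linarith
      have hgM : g y ≤ M := by
        rcases lt_or_ge ‖y‖ R₀ with hcase | hcase
        · have h1 : g y ≤ C₁ * ‖y‖ ^ (-β₁) := hgin y (lt_of_lt_of_le hr8 hylb) hcase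
          have h2 : ‖y‖ ^ (-β₁) ≤ ‖y‖ ^ (-β') :=
            Real.rpow_le_rpow_of_exponent_ge (lt_of_lt_of_le hr8 hylb) (by linarith)
              (by simp [hβ', neg_le_neg_iff, le_max_left])
          have h3 : ‖y‖ ^ (-β') ≤ (R₀ / 8) ^ (-β') :=
            Real.rpow_le_rpow_of_nonpos hr8 hylb (neg_nonpos.mpr hβ'0)
          calc g y ≤ C₁ * ‖y‖ ^ (-β₁) := h1
            _ ≤ C₁ * (R₀ / 8) ^ (-β') := by nlinarith [hC₁.le]
            _ ≤ M := le_max_left _ _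
        · have h1 : g y ≤ C₂ / (1 + ‖y‖ ^ β₂) := hgout y hcase
          have h2 : C₂ / (1 + ‖y‖ ^ β₂) ≤ C₂ := by
            apply div_le_self hC₂.le
            have := Real.rpow_nonneg (norm_nonneg y) β₂
            linarith
          exact le_trans (h1.trans h2) (le_max_right _ _)
      refine ENNReal.ofReal_le_ofReal ?_
      rcases eq_or_ne y x with rfl | hyx
      · simp [Real.zero_rpow hν0.ne', Real.rpow_neg]
      · have hd : 0 < ‖x - y‖ := by
          rw [norm_pos_iff, sub_ne_zero]
          exact (Ne.symm hyx)
        have hdν : 0 < ‖x - y‖ ^ ν := Real.rpow_pos_of_pos hd _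
        calc g y / ‖x - y‖ ^ ν ≤ M / ‖x - y‖ ^ ν := (div_le_div_iff_of_pos_right hdν).mpr hgM
          _ = M * ‖x - y‖ ^ (-ν) := by
              rw [Real.rpow_neg (norm_nonneg _), div_eq_mul_inv]
    calc ∫⁻ y in S₁, ENNReal.ofReal (g y / ‖x - y‖ ^ ν)
        ≤ ∫⁻ y in S₁, ENNReal.ofReal (M * ‖x - y‖ ^ (-ν)) :=
          setLIntegral_mono_ae' measurableSet_ball hptwise
      _ = ENNReal.ofReal M * ∫⁻ y in S₁, ENNReal.ofReal (‖x - y‖ ^ (-ν)) := by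
          simp_rw [ENNReal.ofReal_mul hM0.le]
          rw [lintegral_const_mul']
          exact ENNReal.ofReal_ne_top
      _ = ENNReal.ofReal M * I₁ := by
          congr 1
          -- translation invariance
          have hmp : MeasurePreserving (fun y : E => x - y) volume volume :=
            Measure.measurePreserving_sub_left volume x
          have hφ : Measurable fun z : E =>
              (Metric.ball (0 : E) (R₀ / 8)).indicator
                (fun z => ENNReal.ofReal (‖z‖ ^ (-ν))) z := by
            apply Measurable.indicator ?_ measurableSet_ball
            fun_prop
          have key : ∫⁻ y : E, (Metric.ball (0 : E) (R₀ / 8)).indicator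
              (fun z => ENNReal.ofReal (‖z‖ ^ (-ν))) (x - y) = I₁ := by
            rw [hmp.lintegral_comp hφ, hI₁, ← lintegral_indicator measurableSet_ball _]
          rw [← key]
          rw [← lintegral_indicator measurableSet_ball _]
          congr 1
          funext y
          by_cases hy : y ∈ S₁
          · have hxy : x - y ∈ Metric.ball (0 : E) (R₀ / 8) := by
              rw [mem_ball_zero_iff]
              rw [hS₁] at hy
              have := mem_ball_iff_norm.mp hy
              rwa [← norm_sub_rev y x]
            rw [Set.indicator_of_mem hy, Set.indicator_of_mem hxy]
          · have hxy : x - y ∉ Metric.ball (0 : E) (R₀ / 8) := by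
              rw [mem_ball_zero_iff]
              intro hcon
              apply hy
              rw [hS₁, mem_ball_iff_norm, norm_sub_rev y x]
              exact hcon
            rw [Set.indicator_of_notMem hy, Set.indicator_of_notMem hxy]
  -- Estimate on S₂
  have hest₂ : ∫⁻ y in S₂, ENNReal.ofReal (g y / ‖x - y‖ ^ ν) ≤
      ENNReal.ofReal c₂ * (ENNReal.ofReal C₁ * I₂ + ENNReal.ofReal C₂ * V6) := by
    have hptwise : ∀ᵐ y : E ∂volume, y ∈ S₂ →
        ENNReal.ofReal (g y / ‖x - y‖ ^ ν) ≤
          ENNReal.ofReal (c₂ * (C₁ * ‖y‖ ^ (-β') + C₂)) := by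
      filter_upwards [hae0] with y hy0 hyS
      have hxy : R₀ / 8 ≤ ‖x - y‖ := by
        have h1 : y ∉ Metric.ball x (R₀ / 8) := by
          have := hyS.2
          rwa [hS₁] at this
        rw [mem_ball_iff_norm, not_lt, norm_sub_rev y x] at h1
        exact h1
      have hdν : (R₀ / 8) ^ ν ≤ ‖x - y‖ ^ ν :=
        Real.rpow_le_rpow hr8.le hxy hν0.le
      have hdν0 : (0 : ℝ) < (R₀ / 8) ^ ν := Real.rpow_pos_of_pos hr8 _
      have hnum : g y ≤ C₁ * ‖y‖ ^ (-β') + C₂ := hgh y hy0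
      have hnn : 0 ≤ C₁ * ‖y‖ ^ (-β') + C₂ := by positivity
      refine ENNReal.ofReal_le_ofReal ?_
      calc g y / ‖x - y‖ ^ ν ≤ (C₁ * ‖y‖ ^ (-β') + C₂) / (R₀ / 8) ^ ν :=
            div_le_div₀ hnn hnum hdν0 hdν
        _ = c₂ * (C₁ * ‖y‖ ^ (-β') + C₂) := by
            rw [hc₂, Real.rpow_neg hr8.le, div_eq_mul_inv, mul_comm]
    have hS₂meas : MeasurableSet S₂ := measurableSet_ball.diff measurableSet_ball
    calc ∫⁻ y in S₂, ENNReal.ofReal (g y / ‖x - y‖ ^ ν)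
        ≤ ∫⁻ y in S₂, ENNReal.ofReal (c₂ * (C₁ * ‖y‖ ^ (-β') + C₂)) :=
          setLIntegral_mono_ae' hS₂meas hptwise
      _ ≤ ∫⁻ y in Metric.ball (0 : E) (6 * R),
            ENNReal.ofReal (c₂ * (C₁ * ‖y‖ ^ (-β') + C₂)) :=
          lintegral_mono_set Set.diff_subset
      _ ≤ ENNReal.ofReal c₂ * (ENNReal.ofReal C₁ * I₂ + ENNReal.ofReal C₂ * V6) := by
          have heq : ∀ y : E, ENNReal.ofReal (c₂ * (C₁ * ‖y‖ ^ (-β') + C₂)) =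
              ENNReal.ofReal c₂ *
                (ENNReal.ofReal C₁ * ENNReal.ofReal (‖y‖ ^ (-β')) + ENNReal.ofReal C₂) := by
            intro y
            rw [ENNReal.ofReal_mul hc₂0.le, ENNReal.ofReal_add (by positivity) hC₂.le,
              ENNReal.ofReal_mul hC₁.le]
          simp_rw [heq]
          rw [lintegral_const_mul' _ _ ENNReal.ofReal_ne_top]
          refine mul_le_mul_right ?_ _
          rw [lintegral_add_right' _ aemeasurable_const]
          refine add_le_add ?_ ?_
          · rw [lintegral_const_mul' _ _ ENNReal.ofReal_ne_top]
          · rw [setLIntegral_const]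
  -- Estimate on S₃
  have hest₃ : ∫⁻ y in S₃, ENNReal.ofReal (g y / ‖x - y‖ ^ ν) ≤
      ENNReal.ofReal c₃ * J := by
    have hptwise : ∀ᵐ y : E ∂volume, y ∈ S₃ →
        ENNReal.ofReal (g y / ‖x - y‖ ^ ν) ≤
          ENNReal.ofReal (c₃ * (1 + ‖y‖) ^ (-(β₂ + ν))) := by
      refine Filter.Eventually.of_forall ?_
      intro y hyS
      have hy6 : 6 * R ≤ ‖y‖ := by
        have := hyS
        rw [hS₃, Set.mem_compl_iff, mem_ball_zero_iff, not_lt] at this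
        exact this
      have hy1 : (1 : ℝ) ≤ ‖y‖ := by linarith
      have hy0 : (0 : ℝ) < ‖y‖ := by linarith
      have hxylb : ‖y‖ / 2 ≤ ‖x - y‖ := by
        have h1 : ‖y‖ - ‖x‖ ≤ ‖x - y‖ := by
          have := norm_sub_norm_le y x
          rw [norm_sub_rev y x] at this
          linarith
        linarith
      have hd0 : (0 : ℝ) < ‖x - y‖ := lt_of_lt_of_le (by linarith) hxylb
      have hg1 : g y ≤ C₂ / ‖y‖ ^ β₂ := by
        have h1 : g y ≤ C₂ / (1 + ‖y‖ ^ β₂) := hgout y (by linarith)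
        have h2 : C₂ / (1 + ‖y‖ ^ β₂) ≤ C₂ / ‖y‖ ^ β₂ := by
          apply div_le_div_of_nonneg_left hC₂.le (Real.rpow_pos_of_pos hy0 _)
          linarith
        linarith
      have hdν : (‖y‖ / 2) ^ ν ≤ ‖x - y‖ ^ ν :=
        Real.rpow_le_rpow (by positivity) hxylb hν0.le
      have hdν0 : (0 : ℝ) < (‖y‖ / 2) ^ ν := Real.rpow_pos_of_pos (by linarith) _
      refine ENNReal.ofReal_le_ofReal ?_
      have step1 : g y / ‖x - y‖ ^ ν ≤ (C₂ / ‖y‖ ^ β₂) / (‖y‖ / 2) ^ ν :=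
        div_le_div₀ (by positivity) hg1 hdν0 hdν
      have step2 : (C₂ / ‖y‖ ^ β₂) / (‖y‖ / 2) ^ ν = C₂ * 2 ^ ν * ‖y‖ ^ (-(β₂ + ν)) := by
        have hA : (0:ℝ) < ‖y‖ ^ β₂ := Real.rpow_pos_of_pos hy0 _
        have hB : (0:ℝ) < ‖y‖ ^ ν := Real.rpow_pos_of_pos hy0 _
        have h2ν : (0:ℝ) < (2:ℝ) ^ ν := Real.rpow_pos_of_pos two_pos _
        rw [Real.div_rpow (norm_nonneg y) (by norm_num : (0:ℝ) ≤ 2),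
          Real.rpow_neg hy0.le, Real.rpow_add hy0]
        field_simp
      have step3 : ‖y‖ ^ (-(β₂ + ν)) ≤ 2 ^ (β₂ + ν) * (1 + ‖y‖) ^ (-(β₂ + ν)) := by
        have hb : (0 : ℝ) < β₂ + ν := by linarith
        have key : (1 + ‖y‖) ^ (β₂ + ν) ≤ 2 ^ (β₂ + ν) * ‖y‖ ^ (β₂ + ν) := by
          have h1 : 1 + ‖y‖ ≤ 2 * ‖y‖ := by linarith
          calc (1 + ‖y‖) ^ (β₂ + ν) ≤ (2 * ‖y‖) ^ (β₂ + ν) :=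
                Real.rpow_le_rpow (by positivity) h1 hb.le
            _ = 2 ^ (β₂ + ν) * ‖y‖ ^ (β₂ + ν) :=
                Real.mul_rpow (by norm_num) (norm_nonneg y)
        have hy' : (0 : ℝ) < ‖y‖ ^ (β₂ + ν) := Real.rpow_pos_of_pos hy0 _
        have h1' : (0 : ℝ) < (1 + ‖y‖) ^ (β₂ + ν) := Real.rpow_pos_of_pos (by linarith) _
        rw [Real.rpow_neg hy0.le, Real.rpow_neg (by positivity : (0:ℝ) ≤ 1 + ‖y‖)]
        rw [inv_eq_one_div, inv_eq_one_div, mul_one_div]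
        rw [div_le_div_iff₀ hy' h1']
        linarith [key]
      calc g y / ‖x - y‖ ^ ν ≤ C₂ * 2 ^ ν * ‖y‖ ^ (-(β₂ + ν)) := by
            rw [← step2]; exact step1
        _ ≤ C₂ * 2 ^ ν * (2 ^ (β₂ + ν) * (1 + ‖y‖) ^ (-(β₂ + ν))) := by
            have : (0:ℝ) < C₂ * 2 ^ ν := by positivity
            nlinarith [step3, this]
        _ = c₃ * (1 + ‖y‖) ^ (-(β₂ + ν)) := by rw [hc₃]; ring
    calc ∫⁻ y in S₃, ENNReal.ofReal (g y / ‖x - y‖ ^ ν)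
        ≤ ∫⁻ y in S₃, ENNReal.ofReal (c₃ * (1 + ‖y‖) ^ (-(β₂ + ν))) :=
          setLIntegral_mono_ae' measurableSet_ball.compl hptwise
      _ ≤ ∫⁻ y : E, ENNReal.ofReal (c₃ * (1 + ‖y‖) ^ (-(β₂ + ν))) :=
          setLIntegral_le_lintegral _ _
      _ = ENNReal.ofReal c₃ * J := by
          simp_rw [ENNReal.ofReal_mul hc₃0.le]
          rw [lintegral_const_mul' _ _ ENNReal.ofReal_ne_top]
  -- put the three pieces together
  have htotal : ∫⁻ y, ENNReal.ofReal (g y / ‖x - y‖ ^ ν) ≤ T := by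
    calc ∫⁻ y, ENNReal.ofReal (g y / ‖x - y‖ ^ ν)
        = ∫⁻ y in (Set.univ : Set E), ENNReal.ofReal (g y / ‖x - y‖ ^ ν) := by
          rw [Measure.restrict_univ]
      _ ≤ ∫⁻ y in S₁ ∪ S₂ ∪ S₃, ENNReal.ofReal (g y / ‖x - y‖ ^ ν) :=
          lintegral_mono_set hcover
      _ ≤ (∫⁻ y in S₁ ∪ S₂, ENNReal.ofReal (g y / ‖x - y‖ ^ ν)) +
            ∫⁻ y in S₃, ENNReal.ofReal (g y / ‖x - y‖ ^ ν) := lintegral_union_le _ _ _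
      _ ≤ ((∫⁻ y in S₁, ENNReal.ofReal (g y / ‖x - y‖ ^ ν)) +
            ∫⁻ y in S₂, ENNReal.ofReal (g y / ‖x - y‖ ^ ν)) +
            ∫⁻ y in S₃, ENNReal.ofReal (g y / ‖x - y‖ ^ ν) :=
          add_le_add_left (lintegral_union_le _ _ _) _
      _ ≤ T := by
          rw [hT]
          exact add_le_add (add_le_add hest₁ hest₂) hest₃
  refine le_trans htotal ?_
  refine le_trans (le_of_eq (ENNReal.ofReal_toReal hTfin.ne).symm) ?_
  exact ENNReal.ofReal_le_ofReal (by linarith)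
end

section
/- Let N ≥ 1, 0 < ν < N, R > 1, C₁ > 0 and β₀ > N − ν. Let g : ℝ^N → [0,∞) be measurable with g(x) ≥ C₁|x|^{−β₀} for all x with |x| ≥ R. Then there exists a constant C̃ > 0, depending on N, ν, β₀, C₁ and R, such that (|x|^{-ν} ∗ g)(x) ≥ C̃ for all x with |x| ≤ R/2. -/
open MeasureTheory

/-- Lemma 2.6 (iii): if `g ≥ C₁|x|^{-β₀}` outside `B_R` with `β₀ > N - ν`, then
`(|x|^{-ν} ∗ g)(x) ≥ C̃` for `|x| ≤ R/2`, with `C̃` depending on `N, ν, β₀, C₁, R`. -/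
theorem stmt_5 (N : ℕ) (hN : 1 ≤ N) (ν C₁ β₀ R : ℝ)
    (hν0 : 0 < ν) (hνN : ν < N) (hC₁ : 0 < C₁) (hR : 1 < R)
    (hβ₀ : (N : ℝ) - ν < β₀) :
    ∃ Ctil : ℝ, 0 < Ctil ∧
      ∀ g : EuclideanSpace ℝ (Fin N) → ℝ, Measurable g → (∀ y, 0 ≤ g y) →
      (∀ y : EuclideanSpace ℝ (Fin N), R ≤ ‖y‖ → C₁ * ‖y‖ ^ (-β₀) ≤ g y) →
      ∀ x : EuclideanSpace ℝ (Fin N), ‖x‖ ≤ R / 2 →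
        ENNReal.ofReal Ctil ≤ ∫⁻ y, ENNReal.ofReal (g y / ‖x - y‖ ^ ν) := by
  set E := EuclideanSpace ℝ (Fin N)
  have hR0 : (0:ℝ) < R := lt_trans one_pos hR
  set S : Set E := Metric.ball 0 (2*R) \ Metric.closedBall 0 R with hS
  have hSopen : IsOpen S := Metric.isOpen_ball.sdiff Metric.isClosed_closedBall
  have hSne : S.Nonempty := by
    refine ⟨EuclideanSpace.single ⟨0, hN⟩ (3*R/2), ?_, ?_⟩
    · rw [Metric.mem_ball, dist_zero_right, EuclideanSpace.norm_single, Real.norm_eq_abs,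
        abs_of_pos (by linarith)]
      linarith
    · rw [Metric.mem_closedBall, dist_zero_right, EuclideanSpace.norm_single, Real.norm_eq_abs,
        abs_of_pos (by linarith)]
      push_neg
      linarith
  have hSpos : 0 < volume S := hSopen.measure_pos volume hSne
  have hSfin : volume S ≠ ⊤ :=
    ((measure_mono (Set.diff_subset)).trans_lt measure_ball_lt_top).ne
  set c : ℝ := C₁ * (2*R) ^ (-β₀) / (3*R) ^ ν with hc
  have hcpos : 0 < c := by
    apply div_pos (mul_pos hC₁ (Real.rpow_pos_of_pos (by linarith) _))
      (Real.rpow_pos_of_pos (by linarith) _)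
  refine ⟨c * (volume S).toReal, mul_pos hcpos (ENNReal.toReal_pos hSpos.ne' hSfin), ?_⟩
  intro g hgm hg0 hglb x hx
  have key : ∀ y ∈ S, ENNReal.ofReal c ≤ ENNReal.ofReal (g y / ‖x - y‖ ^ ν) := by
    intro y hy
    obtain ⟨hy1, hy2⟩ := hy
    rw [Metric.mem_ball, dist_zero_right] at hy1
    rw [Metric.mem_closedBall, dist_zero_right] at hy2
    push_neg at hy2
    apply ENNReal.ofReal_le_ofReal
    have hnxy : R / 2 ≤ ‖x - y‖ := by
      have := norm_sub_norm_le y x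
      have h2 : ‖x - y‖ = ‖y - x‖ := norm_sub_rev _ _
      linarith [norm_sub_norm_le y x]
    have hxy3R : ‖x - y‖ ≤ 3 * R := by
      have := norm_sub_le x y
      linarith
    have h1 : C₁ * (2*R) ^ (-β₀) ≤ g y := by
      refine le_trans ?_ (hglb y hy2.le)
      apply mul_le_mul_of_nonneg_left _ hC₁.le
      exact Real.rpow_le_rpow_of_nonpos (by linarith) hy1.le (by nlinarith)
    have h2 : ‖x - y‖ ^ ν ≤ (3*R) ^ ν :=
      Real.rpow_le_rpow (norm_nonneg _) hxy3R hν0.le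
    have h3 : (0:ℝ) < ‖x - y‖ ^ ν :=
      Real.rpow_pos_of_pos (by linarith) _
    exact div_le_div₀ (hg0 y) h1 h3 h2
  calc ENNReal.ofReal (c * (volume S).toReal)
      = ENNReal.ofReal c * volume S := by
        rw [ENNReal.ofReal_mul hcpos.le, ENNReal.ofReal_toReal hSfin]
    _ = ∫⁻ _ in S, ENNReal.ofReal c := (setLIntegral_const S _).symm
    _ ≤ ∫⁻ y in S, ENNReal.ofReal (g y / ‖x - y‖ ^ ν) :=
        setLIntegral_mono' hSopen.measurableSet key
    _ ≤ ∫⁻ y, ENNReal.ofReal (g y / ‖x - y‖ ^ ν) := setLIntegral_le_lintegral _ _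
end

section
/- Let N ≥ 1, σ > 0, q > 0, λ ∈ ℝ, and let u : ℝ^N → [0,∞) be measurable. For z ∈ ℝ^N set V̄(z) := ∫_{ℝ^N} u(y)^q/|z−y|^{σ} dy. Fix x ∈ ℝ^N and assume that the functions y ↦ u(y)^q/|x−y|^{σ} and y ↦ u(y)^q/|x_λ−y|^{σ} are integrable on ℝ^N. Then the function y ↦ (|x−y|^{−σ} − |x_λ−y|^{−σ})·(u(y)^q − u(y_λ)^q) is integrable on Σ_λ and V̄(x) − V̄(x_λ) = ∫_{Σ_λ} (|x−y|^{−σ} − |x_λ−y|^{−σ})·(u(y)^q − u(y_λ)^q) dy. -/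
open MeasureTheory

/-- Reflection of `x` across the hyperplane `T_λ = {x : x₁ = λ}`. -/
def reflect (N : ℕ) (hN : 0 < N) (lam : ℝ) (x : EuclideanSpace ℝ (Fin N)) :
    EuclideanSpace ℝ (Fin N) :=
  WithLp.toLp 2 (fun i => if i = (⟨0, hN⟩ : Fin N) then 2 * lam - x i else x i)

/-- The half-space `Σ_λ = {x : x₁ < λ}`. -/
def halfSpace (N : ℕ) (hN : 0 < N) (lam : ℝ) : Set (EuclideanSpace ℝ (Fin N)) :=
  {x | x ⟨0, hN⟩ < lam}

/-!
The reflection `y ↦ y_λ` is an isometric involution of `ℝ^N`, hence preserves Lebesgue measure,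
and it maps `Σ_λ` onto the complement of `Σ_λ` up to the null hyperplane `T_λ`. So every
integrable `g` satisfies `∫ g = ∫_{Σ_λ} (g(y) + g(y_λ)) dy`. Since `|x - y_λ| = |x_λ - y|` and
`|x_λ - y_λ| = |x - y|`, the integrand on the right-hand side is exactly this symmetrisation of
`u^q / |x - ·|^σ` minus that of `u^q / |x_λ - ·|^σ`.
-/

section Involution

variable {α E : Type*} [MeasurableSpace α] {μ : Measure α} [NormedAddCommGroup E]
  {R : α → α} {S : Set α} {g : α → E}

theorem integrableOn_add_comp (hR : MeasurePreserving R μ μ) (hg : Integrable g μ) :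
    IntegrableOn (fun x => g x + g (R x)) S μ :=
  (hg.add (hR.integrable_comp_of_integrable hg)).integrableOn

theorem setIntegral_add_comp_of_compl_ae_eq_preimage [NormedSpace ℝ E]
    (hR : MeasurePreserving R μ μ) (hRR : Function.Involutive R) (hS : MeasurableSet S)
    (hSc : Sᶜ =ᵐ[μ] R ⁻¹' S) (hg : Integrable g μ) :
    ∫ x in S, (g x + g (R x)) ∂μ = ∫ x, g x ∂μ := by
  have hemb : MeasurableEmbedding R :=
    (MeasurableEquiv.ofInvolutive R hRR hR.measurable).measurableEmbedding
  have hgR : Integrable (fun x => g (R x)) μ := hR.integrable_comp_of_integrable hg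
  have hcompl : ∫ x in Sᶜ, g x ∂μ = ∫ x in S, g (R x) ∂μ := by
    refine (setIntegral_congr_set hSc).trans ?_
    simpa only [hRR _] using hR.setIntegral_preimage_emb hemb (fun x => g (R x)) S
  rw [integral_add hg.integrableOn hgR.integrableOn, ← hcompl, integral_add_compl hS hg]

end Involution

section Reflection

variable {N : ℕ} (hN : 0 < N) (lam : ℝ)

theorem reflect_involutive : Function.Involutive (reflect N hN lam) := by
  intro y
  ext i
  by_cases h : i = (⟨0, hN⟩ : Fin N) <;> simp [reflect, h]

theorem isometry_reflect : Isometry (reflect N hN lam) := by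
  refine Isometry.of_dist_eq fun a b => ?_
  rw [EuclideanSpace.dist_eq, EuclideanSpace.dist_eq]
  congr 1
  refine Finset.sum_congr rfl fun i _ => ?_
  by_cases h : i = (⟨0, hN⟩ : Fin N) <;> simp [reflect, h, Real.dist_eq]
  ring

theorem norm_reflect_sub_reflect (a b : EuclideanSpace ℝ (Fin N)) :
    ‖reflect N hN lam a - reflect N hN lam b‖ = ‖a - b‖ := by
  rw [← dist_eq_norm, ← dist_eq_norm, (isometry_reflect hN lam).dist_eq]

theorem norm_sub_reflect (a b : EuclideanSpace ℝ (Fin N)) :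
    ‖a - reflect N hN lam b‖ = ‖reflect N hN lam a - b‖ := by
  rw [← norm_reflect_sub_reflect hN lam, reflect_involutive hN lam b]

theorem measurePreserving_reflect : MeasurePreserving (reflect N hN lam) := by
  have h := (IsometryEquiv.mk ((reflect_involutive hN lam).toPerm _)
    (isometry_reflect hN lam)).measurePreserving_euclideanHausdorffMeasure N
  rwa [EuclideanSpace.euclideanHausdorffMeasure_eq_volume] at h

theorem EuclideanSpace.ae_apply_ne (i : Fin N) (c : ℝ) :
    ∀ᵐ y : EuclideanSpace ℝ (Fin N), y i ≠ c :=
  (EuclideanSpace.volume_preserving_symm_measurableEquiv_toLp (Fin N)).quasiMeasurePreserving.ae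
    (Measure.ae_eval_ne (α := fun _ => ℝ) (fun _ => volume) i c :)

theorem measurableSet_halfSpace : MeasurableSet (halfSpace N hN lam) :=
  measurableSet_lt (by fun_prop) measurable_const

theorem compl_halfSpace_ae_eq_preimage_reflect :
    (halfSpace N hN lam)ᶜ =ᵐ[volume] reflect N hN lam ⁻¹' halfSpace N hN lam := by
  refine Filter.eventuallyEq_set.2
    ((EuclideanSpace.ae_apply_ne ⟨0, hN⟩ lam).mono fun y hy => ?_)
  change ¬ y ⟨0, hN⟩ < lam ↔ reflect N hN lam y ⟨0, hN⟩ < lam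
  simp only [reflect, PiLp.toLp_apply, if_true, not_lt]
  constructor <;> intro h
  · linarith [lt_of_le_of_ne h hy.symm]
  · linarith

end Reflection

theorem stmt_6_general (N : ℕ) (hN : 0 < N) (σ q lam : ℝ)
    (u : EuclideanSpace ℝ (Fin N) → ℝ)
    (x : EuclideanSpace ℝ (Fin N))
    (hint1 : Integrable (fun y => u y ^ q / ‖x - y‖ ^ σ))
    (hint2 : Integrable (fun y => u y ^ q / ‖reflect N hN lam x - y‖ ^ σ)) :
    IntegrableOn
        (fun y => (1 / ‖x - y‖ ^ σ - 1 / ‖reflect N hN lam x - y‖ ^ σ) *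
          (u y ^ q - u (reflect N hN lam y) ^ q)) (halfSpace N hN lam) ∧
      (∫ y, u y ^ q / ‖x - y‖ ^ σ) - (∫ y, u y ^ q / ‖reflect N hN lam x - y‖ ^ σ) =
        ∫ y in halfSpace N hN lam,
          (1 / ‖x - y‖ ^ σ - 1 / ‖reflect N hN lam x - y‖ ^ σ) *
            (u y ^ q - u (reflect N hN lam y) ^ q) := by
  set R := reflect N hN lam
  have hR := measurePreserving_reflect hN lam
  have hintegrand : ∀ y, (1 / ‖x - y‖ ^ σ - 1 / ‖R x - y‖ ^ σ) * (u y ^ q - u (R y) ^ q) =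
      (u y ^ q / ‖x - y‖ ^ σ + u (R y) ^ q / ‖x - R y‖ ^ σ) -
        (u y ^ q / ‖R x - y‖ ^ σ + u (R y) ^ q / ‖R x - R y‖ ^ σ) := by
    intro y
    rw [norm_sub_reflect, norm_reflect_sub_reflect]
    ring
  have hsymm {g : EuclideanSpace ℝ (Fin N) → ℝ} (hg : Integrable g) :=
    setIntegral_add_comp_of_compl_ae_eq_preimage hR (reflect_involutive hN lam)
      (measurableSet_halfSpace hN lam) (compl_halfSpace_ae_eq_preimage_reflect hN lam) hg
  simp only [hintegrand]
  refine ⟨(integrableOn_add_comp hR hint1).sub (integrableOn_add_comp hR hint2), ?_⟩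
  rw [integral_sub (integrableOn_add_comp hR hint1) (integrableOn_add_comp hR hint2),
    hsymm hint1, hsymm hint2]

/-- Lemma 4.1: the difference identity for the convolution
`V̄(z) = ∫ u(y)^q / |z - y|^σ dy` across the moving plane `T_λ`. -/
theorem stmt_6 (N : ℕ) (hN : 0 < N) (σ q lam : ℝ) (hσ : 0 < σ) (hq : 0 < q)
    (u : EuclideanSpace ℝ (Fin N) → ℝ) (hum : Measurable u) (hu0 : ∀ y, 0 ≤ u y)
    (x : EuclideanSpace ℝ (Fin N))
    (hint1 : Integrable (fun y => u y ^ q / ‖x - y‖ ^ σ))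
    (hint2 : Integrable (fun y => u y ^ q / ‖reflect N hN lam x - y‖ ^ σ)) :
    IntegrableOn
        (fun y => (1 / ‖x - y‖ ^ σ - 1 / ‖reflect N hN lam x - y‖ ^ σ) *
          (u y ^ q - u (reflect N hN lam y) ^ q)) (halfSpace N hN lam) ∧
      (∫ y, u y ^ q / ‖x - y‖ ^ σ) - (∫ y, u y ^ q / ‖reflect N hN lam x - y‖ ^ σ) =
        ∫ y in halfSpace N hN lam,
          (1 / ‖x - y‖ ^ σ - 1 / ‖reflect N hN lam x - y‖ ^ σ) *
            (u y ^ q - u (reflect N hN lam y) ^ q) :=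
  stmt_6_general N hN σ q lam u x hint1 hint2
end

section
/- Let N ≥ 1, κ > 0, γ₂ > 0, R₁ > 1 and c₀, C₀ > 0. Let u be a continuous positive function on ℝ^N ∖ {0} such that c₀|x|^{−γ₂} ≤ u(x) ≤ C₀|x|^{−γ₂} for all |x| > R₁, and such that inf{u(x) : 0 < |x| ≤ R₁} > 0. Then there exists a constant c̃ > 0, depending only on c₀, C₀, R₁, κ, inf_{0<|x|≤R₁} u and sup_{|x|>κ} u, such that for every λ ≤ −κ and every x ∈ Σ_λ with x_λ ≠ 0 one has u(x_λ) ≥ c̃ · u(x). -/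
open MeasureTheory

/-!
Put `M := sup_{|x| ≥ κ} u`, finite by compactness on `κ ≤ |x| ≤ R₁` and by the upper decay bound
beyond, and `m := inf_{0 < |x| ≤ R₁} u`. For `x ∈ Σ_λ` with `λ ≤ -κ` we have `|x| > κ` and
`|x_λ| ≤ |x|`. If `|x_λ| ≤ R₁` then `u(x_λ) ≥ m ≥ (m / M) u(x)`; otherwise both points lie outside
the ball of radius `R₁`, and the two decay bounds give `u(x_λ) ≥ c₀|x_λ|^{-γ₂} ≥ c₀|x|^{-γ₂} ≥
(c₀ / C₀) u(x)`. Hence `c̃ = min (m / M) (c₀ / C₀)` works.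
-/

section PowerDecay

variable {E : Type*} [NormedAddCommGroup E]

def HasPowerDecay (u : E → ℝ) (R c C γ : ℝ) : Prop :=
  ∀ x : E, R < ‖x‖ → c * ‖x‖ ^ (-γ) ≤ u x ∧ u x ≤ C * ‖x‖ ^ (-γ)

variable {u : E → ℝ} {R c C γ : ℝ}

theorem HasPowerDecay.div_mul_le_of_norm_le (h : HasPowerDecay u R c C γ) (hR : 0 ≤ R)
    (hγ : 0 ≤ γ) (hc : 0 ≤ c) (hC : 0 < C) {x y : E} (hy : R < ‖y‖) (hyx : ‖y‖ ≤ ‖x‖) :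
    c / C * u x ≤ u y := by
  have hdecay : ‖x‖ ^ (-γ) ≤ ‖y‖ ^ (-γ) :=
    Real.rpow_le_rpow_of_nonpos (hR.trans_lt hy) hyx (neg_nonpos.mpr hγ)
  calc c / C * u x ≤ c / C * (C * ‖x‖ ^ (-γ)) :=
        mul_le_mul_of_nonneg_left (h x (hy.trans_le hyx)).2 (div_nonneg hc hC.le)
    _ = c * ‖x‖ ^ (-γ) := by field_simp
    _ ≤ c * ‖y‖ ^ (-γ) := mul_le_mul_of_nonneg_left hdecay hc
    _ ≤ u y := (h y hy).1

theorem HasPowerDecay.exists_pos_bound_of_le_norm [ProperSpace E] (h : HasPowerDecay u R c C γ)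
    (hcont : ContinuousOn u {x : E | x ≠ 0}) {κ : ℝ} (hκ : 0 < κ) (hγ : 0 ≤ γ) (hC : 0 ≤ C) :
    ∃ M, 0 < M ∧ ∀ x : E, κ ≤ ‖x‖ → u x ≤ M := by
  set K : Set E := Metric.closedBall 0 R ∩ {x | κ ≤ ‖x‖}
  have hK : IsCompact K :=
    (isCompact_closedBall _ _).inter_right (isClosed_le continuous_const continuous_norm)
  have hKu : ContinuousOn u K := hcont.mono fun x hx hx0 => by
    have : κ ≤ ‖x‖ := hx.2
    simp [hx0] at this
    linarith
  obtain ⟨B, hB⟩ := hK.bddAbove_image hKu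
  refine ⟨max 1 (max B (C * κ ^ (-γ))), lt_max_of_lt_left one_pos, fun x hx => ?_⟩
  refine le_max_of_le_right ?_
  by_cases hxR : ‖x‖ ≤ R
  · exact le_max_of_le_left (hB ⟨x, ⟨mem_closedBall_zero_iff.mpr hxR, hx⟩, rfl⟩)
  · calc u x ≤ C * ‖x‖ ^ (-γ) := (h x (not_le.mp hxR)).2
      _ ≤ C * κ ^ (-γ) :=
        mul_le_mul_of_nonneg_left (Real.rpow_le_rpow_of_nonpos hκ hx (neg_nonpos.mpr hγ)) hC
      _ ≤ _ := le_max_right _ _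

end PowerDecay

theorem sInf_image_le_of_pos {E : Type*} [NormedAddCommGroup E] {u : E → ℝ}
    (hpos : ∀ x : E, x ≠ 0 → 0 < u x) {R : ℝ} {y : E} (hy0 : y ≠ 0) (hyR : ‖y‖ ≤ R) :
    sInf (u '' {x : E | 0 < ‖x‖ ∧ ‖x‖ ≤ R}) ≤ u y := by
  refine csInf_le ⟨0, ?_⟩ ⟨y, ⟨norm_pos_iff.mpr hy0, hyR⟩, rfl⟩
  rintro _ ⟨z, hz, rfl⟩
  exact (hpos z (norm_pos_iff.mp hz.1)).le

section Reflection

variable {N : ℕ} (hN : 0 < N) {lam : ℝ} {x : EuclideanSpace ℝ (Fin N)}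

theorem lt_norm_of_mem_halfSpace {κ : ℝ} (hx : x ∈ halfSpace N hN lam) (hlam : lam ≤ -κ) :
    κ < ‖x‖ := by
  have hx : x ⟨0, hN⟩ < lam := hx
  have := PiLp.norm_apply_le x ⟨0, hN⟩
  rw [Real.norm_eq_abs] at this
  linarith [neg_abs_le (x ⟨0, hN⟩)]

theorem norm_reflect_le (hx : x ∈ halfSpace N hN lam) (hlam : lam ≤ 0) :
    ‖reflect N hN lam x‖ ≤ ‖x‖ := by
  have hx : x ⟨0, hN⟩ < lam := hx
  rw [EuclideanSpace.norm_eq, EuclideanSpace.norm_eq]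
  refine Real.sqrt_le_sqrt (Finset.sum_le_sum fun i _ => ?_)
  by_cases hi : i = ⟨0, hN⟩
  · subst hi
    simp only [reflect, PiLp.toLp_apply, if_true, Real.norm_eq_abs, sq_abs]
    nlinarith
  · simp [reflect, hi]

end Reflection

/-- Lemma 4.2: a uniform lower bound `u(x_λ) ≥ c̃ u(x)` on `Σ_λ`, for all `λ ≤ -κ`. -/
theorem stmt_7 (N : ℕ) (hN : 0 < N) (κ γ₂ R₁ c₀ C₀ : ℝ)
    (hκ : 0 < κ) (hγ₂ : 0 < γ₂) (hR₁ : 1 < R₁) (hc₀ : 0 < c₀) (hC₀ : 0 < C₀)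
    (u : EuclideanSpace ℝ (Fin N) → ℝ)
    (hcont : ContinuousOn u {x : EuclideanSpace ℝ (Fin N) | x ≠ 0})
    (hpos : ∀ x : EuclideanSpace ℝ (Fin N), x ≠ 0 → 0 < u x)
    (hbd : ∀ x : EuclideanSpace ℝ (Fin N), R₁ < ‖x‖ →
      c₀ * ‖x‖ ^ (-γ₂) ≤ u x ∧ u x ≤ C₀ * ‖x‖ ^ (-γ₂))
    (hinf : 0 < sInf (u '' {x : EuclideanSpace ℝ (Fin N) | 0 < ‖x‖ ∧ ‖x‖ ≤ R₁})) :
    ∃ ctil : ℝ, 0 < ctil ∧ ∀ lam : ℝ, lam ≤ -κ →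
      ∀ x ∈ halfSpace N hN lam, reflect N hN lam x ≠ 0 →
        ctil * u x ≤ u (reflect N hN lam x) := by
  have hdecay : HasPowerDecay u R₁ c₀ C₀ γ₂ := hbd
  obtain ⟨M, hM, huM⟩ := hdecay.exists_pos_bound_of_le_norm hcont hκ hγ₂.le hC₀.le
  set m := sInf (u '' {x : EuclideanSpace ℝ (Fin N) | 0 < ‖x‖ ∧ ‖x‖ ≤ R₁})
  refine ⟨min (m / M) (c₀ / C₀), lt_min (div_pos hinf hM) (div_pos hc₀ hC₀),
    fun lam hlam x hx hy0 => ?_⟩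
  set y := reflect N hN lam x
  have hxκ : κ < ‖x‖ := lt_norm_of_mem_halfSpace hN hx hlam
  have hyx : ‖y‖ ≤ ‖x‖ := norm_reflect_le hN hx (by linarith)
  have hux : 0 < u x := hpos x (norm_pos_iff.mp (hκ.trans hxκ))
  by_cases hyR : ‖y‖ ≤ R₁
  · calc min (m / M) (c₀ / C₀) * u x ≤ m / M * M := by
          gcongr
          exacts [min_le_left _ _, huM x hxκ.le]
      _ = m := div_mul_cancel₀ m hM.ne'
      _ ≤ u y := sInf_image_le_of_pos hpos hy0 hyR
  · calc min (m / M) (c₀ / C₀) * u x ≤ c₀ / C₀ * u x := by gcongr; exact min_le_right _ _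
      _ ≤ u y := hdecay.div_mul_le_of_norm_le (by linarith) hγ₂.le hc₀.le hC₀ (not_le.mp hyR) hyx
end

section
/- Let N ≥ 1 and p > 1. There exists a constant C_p > 0, depending only on p, such that the following holds: for every open set Ω ⊆ ℝ^N and all positive C¹ functions u, v : Ω → ℝ, at every point x ∈ Ω one has |∇u(x)|^{p−2}∇u(x) · ∇(u − v^p u^{1−p})(x) + |∇v(x)|^{p−2}∇v(x) · ∇(v − u^p v^{1−p})(x) ≥ C_p · min{u(x)^p, v(x)^p} · (|∇log u(x)| + |∇log v(x)|)^{p−2} · |∇log u(x) − ∇log v(x)|². -/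
open scoped RealInnerProductSpace
open Real

private lemma osv_rpow_succ {x : ℝ} (hx : 0 ≤ x) {q r : ℝ} (hq : r ≠ 0) (hqr : q + 1 = r) :
    x ^ q * x = x ^ r := by
  rcases eq_or_lt_of_le hx with rfl | h
  · rw [Real.zero_rpow hq, mul_zero]
  · rw [← hqr, Real.rpow_add_one h.ne']

private lemma osv_E1 {p s t : ℝ} (hp : 1 < p) (hs : 0 ≤ s) (ht : 0 ≤ t) :
    2 ^ (1 - p) * (s + t) ^ (p - 1) ≤ s ^ (p - 1) + t ^ (p - 1) := by
  have hq : (0:ℝ) ≤ p - 1 := by linarith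
  have key : (s + t) ^ (p - 1) ≤ 2 ^ (p - 1) * (s ^ (p - 1) + t ^ (p - 1)) := by
    have h2 : (0:ℝ) ≤ 2 ^ (p-1) := rpow_nonneg (by norm_num) _
    rcases le_total s t with h | h
    · calc (s+t)^(p-1) ≤ (2*t)^(p-1) := rpow_le_rpow (by linarith) (by linarith) hq
        _ = 2^(p-1) * t^(p-1) := mul_rpow (by norm_num) ht
        _ ≤ 2^(p-1) * (s^(p-1) + t^(p-1)) := by
            nlinarith [rpow_nonneg hs (p-1)]
    · calc (s+t)^(p-1) ≤ (2*s)^(p-1) := rpow_le_rpow (by linarith) (by linarith) hq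
        _ = 2^(p-1) * s^(p-1) := mul_rpow (by norm_num) hs
        _ ≤ 2^(p-1) * (s^(p-1) + t^(p-1)) := by
            nlinarith [rpow_nonneg ht (p-1)]
  have h2 : (2:ℝ)^(1-p) * 2^(p-1) = 1 := by
    rw [← rpow_add (by norm_num : (0:ℝ) < 2)]; norm_num
  have h3 : (0:ℝ) ≤ 2^(1-p) := rpow_nonneg (by norm_num) _
  calc 2^(1-p)*(s+t)^(p-1) ≤ 2^(1-p)*(2^(p-1)*(s^(p-1)+t^(p-1))) :=
        mul_le_mul_of_nonneg_left key h3
    _ = s^(p-1) + t^(p-1) := by rw [← mul_assoc, h2, one_mul]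

private lemma osv_E2 {p s t : ℝ} (hp : 1 < p) (ht : 0 ≤ t) (hts : t ≤ s) :
    (min (p-1) 1 * 2^(1-p)) * ((s+t)^(p-2) * (s-t)) ≤ s^(p-1) - t^(p-1) := by
  rcases eq_or_lt_of_le hts with rfl | hlt
  · simp
  have hs : 0 < s := lt_of_le_of_lt ht hlt
  have hst0 : (0:ℝ) < s + t := by linarith
  have hX : (0:ℝ) ≤ (s+t)^(p-2) := rpow_nonneg hst0.le _
  have h2p : (0:ℝ) < 2^(1-p) := rpow_pos_of_pos (by norm_num) _
  have hmin : min (p-1) 1 ≤ p-1 := min_le_left _ _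
  rcases le_or_gt 2 p with h2 | h2
  · set m := (s+t)/2 with hm
    have hm0 : 0 < m := by rw [hm]; linarith
    have hxm : (-1:ℝ) ≤ (s-m)/m := by
      have : 0 ≤ (s-m)/m := div_nonneg (by rw [hm]; linarith) hm0.le
      linarith
    have hber := one_add_mul_self_le_rpow_one_add hxm (show (1:ℝ) ≤ p-1 by linarith)
    rw [show 1 + (s-m)/m = s/m by field_simp; ring] at hber
    rw [div_rpow hs.le hm0.le] at hber
    have hmp : (0:ℝ) < m^(p-1) := rpow_pos_of_pos hm0 _
    have hmain : m^(p-1) * (1 + (p-1)*((s-m)/m)) ≤ s^(p-1) := by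
      have h' := mul_le_mul_of_nonneg_left hber hmp.le
      rwa [mul_div_cancel₀ _ hmp.ne'] at h'
    have hmm : m^(p-2) * m = m^(p-1) := osv_rpow_succ hm0.le (by linarith) (by ring)
    have hexp : m^(p-1) * (1 + (p-1)*((s-m)/m)) = m^(p-1) + (p-1)*m^(p-2)*(s-m) := by
      rw [← hmm]; field_simp
    have htm : t^(p-1) ≤ m^(p-1) := rpow_le_rpow ht (by rw [hm]; linarith) (by linarith)
    have hge : (p-1)*m^(p-2)*(s-m) ≤ s^(p-1) - t^(p-1) := by
      rw [hexp] at hmain; linarith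
    have hmp2 : m^(p-2) = (s+t)^(p-2)/2^(p-2) := by rw [hm, div_rpow hst0.le (by norm_num)]
    have hsm2 : s - m = (s-t)/2 := by rw [hm]; ring
    have h2id : (2:ℝ)^(p-2) * 2 = 2^(p-1) := osv_rpow_succ (by norm_num) (by linarith) (by ring)
    have h2inv : (2:ℝ)^(1-p) * 2^(p-1) = 1 := by
      rw [← rpow_add (by norm_num : (0:ℝ) < 2)]; norm_num
    have hrel : (2:ℝ)^(1-p) * (2^(p-2)*2) = 1 := by rw [h2id]; exact h2inv
    have h2pos : (0:ℝ) < 2^(p-2) := rpow_pos_of_pos (by norm_num) _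
    have e : (p-1) * ((s+t)^(p-2)/2^(p-2)) * ((s-t)/2) =
        (p-1)*2^(1-p) * ((s+t)^(p-2)*(s-t)) := by
      rw [show (2:ℝ)^(1-p) = 1/(2^(p-2)*2) by rw [eq_div_iff (by positivity)]; exact hrel]
      ring
    have hCle : min (p-1) 1 * 2^(1-p) * ((s+t)^(p-2)*(s-t)) ≤ (p-1)*m^(p-2)*(s-m) := by
      rw [hmp2, hsm2, e]
      exact mul_le_mul_of_nonneg_right (mul_le_mul_of_nonneg_right hmin h2p.le)
        (mul_nonneg hX (by linarith))
    linarith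
  · have hber := rpow_one_add_le_one_add_mul_self
      (show (-1:ℝ) ≤ t/s - 1 by
        have : 0 ≤ t/s := div_nonneg ht hs.le
        linarith)
      (show (0:ℝ) ≤ p-1 by linarith) (show p-1 ≤ (1:ℝ) by linarith)
    rw [show 1 + (t/s - 1) = t/s by ring] at hber
    rw [div_rpow ht hs.le] at hber
    have hsp : (0:ℝ) < s^(p-1) := rpow_pos_of_pos hs _
    have hmul := mul_le_mul_of_nonneg_left hber hsp.le
    rw [mul_div_cancel₀ _ hsp.ne'] at hmul
    have hss : s^(p-2) * s = s^(p-1) := osv_rpow_succ hs.le (by linarith) (by ring)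
    have hexp : s^(p-1) * (1 + (p-1)*(t/s - 1)) = s^(p-1) - (p-1)*s^(p-2)*(s-t) := by
      rw [← hss]; field_simp; ring
    have hmono : (s+t)^(p-2) ≤ s^(p-2) := rpow_le_rpow_of_nonpos hs (by linarith) (by linarith)
    have hC : min (p-1) 1 * 2^(1-p) ≤ p - 1 := by
      have h2' : 2^(1-p) ≤ (1:ℝ) := rpow_le_one_of_one_le_of_nonpos (by norm_num) (by linarith)
      have h0 : 0 ≤ min (p-1) 1 := le_min (by linarith) zero_le_one
      nlinarith
    have hstm : (0:ℝ) ≤ s - t := by linarith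
    have hm2 : (s+t)^(p-2)*(s-t) ≤ s^(p-2)*(s-t) := mul_le_mul_of_nonneg_right hmono hstm
    have hfin : (p-1)*s^(p-2)*(s-t) ≤ s^(p-1) - t^(p-1) := by
      rw [hexp] at hmul; linarith
    nlinarith [mul_nonneg hX hstm, mul_nonneg (mul_nonneg
      (le_min (show (0:ℝ) ≤ p-1 by linarith) zero_le_one) h2p.le) (mul_nonneg hX hstm)]

private lemma osv_sigma {p : ℝ} (hp : 1 < p) {s t σ : ℝ} (hs : 0 ≤ s) (ht : 0 ≤ t)
    (hσ1 : σ ≤ s * t) (hσ2 : -(s*t) ≤ σ) :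
    (min (p-1) 1 * 2^(1-p)) * ((s+t)^(p-2) * (s^2 + t^2 - 2*σ)) ≤
      s^p + t^p - (s^(p-2) + t^(p-2)) * σ := by
  set C := min (p-1) 1 * 2^(1-p) with hCdef
  have hC0 : 0 < C := by
    have h1 : 0 < min (p-1) 1 := lt_min (by linarith) one_pos
    exact mul_pos h1 (rpow_pos_of_pos (by norm_num) _)
  have hp0 : p ≠ 0 := by linarith
  have hp1 : p - 1 ≠ 0 := by linarith
  have hss : s^(p-2) * s = s^(p-1) := osv_rpow_succ hs hp1 (by ring)
  have hsp : s^(p-1) * s = s^p := osv_rpow_succ hs hp0 (by ring)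
  have htt : t^(p-2) * t = t^(p-1) := osv_rpow_succ ht hp1 (by ring)
  have htp : t^(p-1) * t = t^p := osv_rpow_succ ht hp0 (by ring)
  have e1 : C * ((s+t)^(p-2) * (s-t)^2) ≤ s^p + t^p - (s^(p-2)+t^(p-2))*(s*t) := by
    rcases le_total t s with h | h
    · have hE := osv_E2 hp ht h
      have h0 : (0:ℝ) ≤ s - t := by linarith
      calc C * ((s+t)^(p-2)*(s-t)^2) = (C * ((s+t)^(p-2)*(s-t))) * (s-t) := by ring
        _ ≤ (s^(p-1) - t^(p-1)) * (s-t) := mul_le_mul_of_nonneg_right hE h0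
        _ = s^p + t^p - (s^(p-2)+t^(p-2))*(s*t) := by
            linear_combination hsp + htp + t*hss + s*htt
    · have hE := osv_E2 hp hs h
      have h0 : (0:ℝ) ≤ t - s := by linarith
      calc C * ((s+t)^(p-2)*(s-t)^2) = (C * ((t+s)^(p-2)*(t-s))) * (t-s) := by ring_nf
        _ ≤ (t^(p-1) - s^(p-1)) * (t-s) := mul_le_mul_of_nonneg_right hE h0
        _ = s^p + t^p - (s^(p-2)+t^(p-2))*(s*t) := by
            linear_combination hsp + htp + t*hss + s*htt
  have e2 : C * ((s+t)^(p-2) * (s+t)^2) ≤ s^p + t^p + (s^(p-2)+t^(p-2))*(s*t) := by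
    have hE := osv_E1 hp hs ht
    have hCle : C ≤ 2^(1-p) := by
      have h1 : min (p-1) 1 ≤ 1 := min_le_right _ _
      have h2 : (0:ℝ) < 2^(1-p) := rpow_pos_of_pos (by norm_num) _
      nlinarith
    have hst : (0:ℝ) ≤ s + t := by linarith
    have k1 : (s+t)^(p-2)*(s+t) = (s+t)^(p-1) := osv_rpow_succ hst hp1 (by ring)
    have k2 : (s+t)^(p-1)*(s+t) = (s+t)^p := osv_rpow_succ hst hp0 (by ring)
    have hXp : (0:ℝ) ≤ (s+t)^(p-1) := rpow_nonneg hst _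
    calc C * ((s+t)^(p-2)*(s+t)^2) = (C * (s+t)^(p-1)) * (s+t) := by
          linear_combination (C*(s+t))*k1
      _ ≤ (2^(1-p) * (s+t)^(p-1)) * (s+t) := by
          apply mul_le_mul_of_nonneg_right (mul_le_mul_of_nonneg_right hCle hXp) hst
      _ ≤ (s^(p-1) + t^(p-1)) * (s+t) := mul_le_mul_of_nonneg_right hE hst
      _ = s^p + t^p + (s^(p-2)+t^(p-2))*(s*t) := by
          linear_combination hsp + htp - t*hss - s*htt
  rcases le_or_gt (2*C*(s+t)^(p-2)) (s^(p-2)+t^(p-2)) with hB | hB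
  · have hmul := mul_le_mul_of_nonpos_left hσ1
      (show 2*C*(s+t)^(p-2) - (s^(p-2)+t^(p-2)) ≤ 0 by linarith)
    nlinarith [e1, hmul]
  · have hmul := mul_le_mul_of_nonneg_left hσ2
      (show (0:ℝ) ≤ 2*C*(s+t)^(p-2) - (s^(p-2)+t^(p-2)) by linarith)
    nlinarith [e2, hmul]

section Vector

variable {F : Type*} [NormedAddCommGroup F] [InnerProductSpace ℝ F]

private lemma osv_B {p : ℝ} (hp : 1 < p) (g h : F) :
    0 ≤ ‖g‖^p + (p-1)*‖h‖^p - p*‖h‖^(p-2)*⟪h,g⟫ := by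
  rcases eq_or_ne h 0 with rfl | hh
  · simp only [inner_zero_left, mul_zero, sub_zero, norm_zero]
    rw [Real.zero_rpow (by linarith : p ≠ 0)]
    have := rpow_nonneg (norm_nonneg g) p
    nlinarith
  · have hh0 : 0 < ‖h‖ := norm_pos_iff.2 hh
    have hp0 : (0:ℝ) < p := by linarith
    have hid : ‖h‖^(p-2) * ‖h‖ = ‖h‖^(p-1) := osv_rpow_succ hh0.le (by linarith) (by ring)
    have step1 : ‖h‖^(p-2)*⟪h,g⟫ ≤ ‖h‖^(p-1)*‖g‖ := by
      have h1 : ⟪h,g⟫ ≤ ‖h‖*‖g‖ := real_inner_le_norm h g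
      have h2 := mul_le_mul_of_nonneg_left h1 (rpow_nonneg (norm_nonneg h) (p-2))
      calc ‖h‖^(p-2)*⟪h,g⟫ ≤ ‖h‖^(p-2)*(‖h‖*‖g‖) := h2
        _ = ‖h‖^(p-1)*‖g‖ := by rw [← hid]; ring
    have young := Real.young_inequality_of_nonneg (norm_nonneg g)
      (rpow_nonneg (norm_nonneg h) (p-1)) (Real.HolderConjugate.conjExponent hp)
    have hq : (‖h‖^(p-1))^(Real.conjExponent p) = ‖h‖^p := by
      rw [← Real.rpow_mul (norm_nonneg h), Real.conjExponent]
      congr 1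
      have hne : p - 1 ≠ 0 := by linarith
      field_simp
    rw [hq] at young
    have hce : Real.conjExponent p = p/(p-1) := rfl
    rw [hce] at young
    have hdiv : ‖h‖^p / (p/(p-1)) = (p-1)*‖h‖^p/p := by
      field_simp
    rw [hdiv] at young
    have hfin := mul_le_mul_of_nonneg_left young hp0.le
    rw [mul_add] at hfin
    rw [mul_div_cancel₀ _ hp0.ne'] at hfin
    rw [mul_div_cancel₀ _ hp0.ne'] at hfin
    nlinarith [step1]

private lemma osv_G {p : ℝ} (hp : 1 < p) (g h : F) :
    p * (min (p-1) 1 * 2^(1-p)) * ((‖g‖+‖h‖)^(p-2) * ‖g - h‖^2) ≤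
      (‖g‖^p + (p-1)*‖h‖^p - p*‖h‖^(p-2)*⟪h,g⟫) +
        (‖h‖^p + (p-1)*‖g‖^p - p*‖g‖^(p-2)*⟪g,h⟫) := by
  have hσ := abs_real_inner_le_norm g h
  have hnorm : ‖g - h‖^2 = ‖g‖^2 - 2*⟪g,h⟫ + ‖h‖^2 := norm_sub_sq_real g h
  have hcomm : ⟪h,g⟫ = ⟪g,h⟫ := real_inner_comm g h
  have key := osv_sigma hp (norm_nonneg g) (norm_nonneg h) (abs_le.1 hσ).2
    (neg_le_of_abs_le hσ)
  have hp0 : (0:ℝ) ≤ p := by linarith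
  have hkey := mul_le_mul_of_nonneg_left key hp0
  rw [hcomm, hnorm]
  nlinarith [hkey]

end Vector

section Gradient

variable {F : Type*} [NormedAddCommGroup F] [InnerProductSpace ℝ F] [CompleteSpace F]

private lemma osv_grad {u v : F → ℝ} {x : F} {a b : F} (p : ℝ)
    (hu : HasGradientAt u a x) (hv : HasGradientAt v b x) (hU : 0 < u x) (hV : 0 < v x) :
    HasGradientAt (fun y => u y - v y ^ p * u y ^ (1 - p))
      ((1 + (p - 1) * ((v x)^p * (u x)^(-p))) • a - (p * ((u x)^(1-p) * (v x)^(p-1))) • b) x := by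
  have hfu := hu.hasFDerivAt
  have hfv := hv.hasFDerivAt
  have h1 : HasFDerivAt (fun y => v y ^ p)
      ((p * v x ^ (p-1)) • (InnerProductSpace.toDual ℝ F b : F →L[ℝ] ℝ)) x :=
    hfv.rpow_const (Or.inl hV.ne')
  have h2 : HasFDerivAt (fun y => u y ^ (1-p))
      (((1-p) * u x ^ (-p)) • (InnerProductSpace.toDual ℝ F a : F →L[ℝ] ℝ)) x := by
    have := hfu.rpow_const (p := 1-p) (Or.inl hU.ne')
    rwa [show (1:ℝ)-p-1 = -p by ring] at this
  have h4 := hfu.sub (h1.mul h2)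
  have hEq : (InnerProductSpace.toDual ℝ F).symm
      ((InnerProductSpace.toDual ℝ F) a -
        ((v x ^ p) • (((1-p) * u x ^ (-p)) • (InnerProductSpace.toDual ℝ F a : F →L[ℝ] ℝ)) +
          (u x ^ (1-p)) • ((p * v x ^ (p-1)) • (InnerProductSpace.toDual ℝ F b : F →L[ℝ] ℝ))))
      = (1 + (p - 1) * ((v x)^p * (u x)^(-p))) • a - (p * ((u x)^(1-p) * (v x)^(p-1))) • b := by
    simp only [map_sub, map_add, map_smul, LinearIsometryEquiv.symm_apply_apply]
    match_scalars <;> ring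
  exact hEq ▸ h4.hasGradientAt

omit [CompleteSpace F] in
private lemma osv_term {p : ℝ} (hp : 1 < p) {U V : ℝ} (hU : 0 < U) (hV : 0 < V) (g h : F) :
    ⟪‖U • g‖^(p-2) • (U • g),
      (1 + (p - 1) * (V^p * U^(-p))) • (U • g) - (p * (U^(1-p) * V^(p-1))) • (V • h)⟫
      = U^p*‖g‖^p + V^p*((p-1)*‖g‖^p - p*‖g‖^(p-2)*⟪g,h⟫) := by
  have hg : ‖U • g‖ = U * ‖g‖ := by rw [norm_smul, Real.norm_eq_abs, abs_of_pos hU]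
  have hp0 : p ≠ 0 := by linarith
  have hp1 : p - 1 ≠ 0 := by linarith
  have hUp : (0:ℝ) < U^p := rpow_pos_of_pos hU _
  have hVp : (0:ℝ) < V^p := rpow_pos_of_pos hV _
  have e1 : U^(p-2) = U^p/U/U := by
    rw [show p-2 = p-1-1 by ring, Real.rpow_sub_one hU.ne', Real.rpow_sub_one hU.ne']
  have e2 : U^(1-p) = U/U^p := by
    rw [show (1:ℝ)-p = -(p-1) by ring, Real.rpow_neg hU.le, Real.rpow_sub_one hU.ne',
      inv_div]
  have e3 : U^(-p) = (U^p)⁻¹ := Real.rpow_neg hU.le p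
  have e4 : V^(p-1) = V^p/V := Real.rpow_sub_one hV.ne' p
  have e5 : ‖g‖^p = ‖g‖^(p-2)*‖g‖*‖g‖ := by
    rw [osv_rpow_succ (norm_nonneg g) hp1 (show p-2+1 = p-1 by ring),
      osv_rpow_succ (norm_nonneg g) hp0 (show p-1+1 = p by ring)]
  simp only [inner_sub_right, real_inner_smul_left, real_inner_smul_right,
    real_inner_self_eq_norm_mul_norm, hg, mul_rpow hU.le (norm_nonneg g)]
  rw [e1, e2, e3, e4, e5]
  field_simp
  ring

end Gradient

/-- Lemma 2.10 (Lemma 3.1 in [OSV]): the pointwise gradient inequality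
`|∇u|^{p-2}∇u · ∇(u - v^p u^{1-p}) + |∇v|^{p-2}∇v · ∇(v - u^p v^{1-p})
  ≥ C_p min{u^p, v^p} (|∇log u| + |∇log v|)^{p-2} |∇log u - ∇log v|²`
for positive `C¹` functions `u, v` on an open set `Ω ⊆ ℝ^N`, where `∇log u = ∇u/u`. -/
theorem stmt_12 (N : ℕ) (hN : 1 ≤ N) (p : ℝ) (hp : 1 < p) :
    ∃ Cp : ℝ, 0 < Cp ∧ ∀ Ω : Set (EuclideanSpace ℝ (Fin N)), IsOpen Ω →
      ∀ u v : EuclideanSpace ℝ (Fin N) → ℝ,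
        ContDiffOn ℝ 1 u Ω → ContDiffOn ℝ 1 v Ω →
        (∀ x ∈ Ω, 0 < u x) → (∀ x ∈ Ω, 0 < v x) →
        ∀ x ∈ Ω,
          Cp * min (u x ^ p) (v x ^ p) *
              (‖(u x)⁻¹ • gradient u x‖ + ‖(v x)⁻¹ • gradient v x‖) ^ (p - 2) *
              ‖(u x)⁻¹ • gradient u x - (v x)⁻¹ • gradient v x‖ ^ 2 ≤
            ⟪‖gradient u x‖ ^ (p - 2) • gradient u x,
              gradient (fun y => u y - v y ^ p * u y ^ (1 - p)) x⟫ +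
            ⟪‖gradient v x‖ ^ (p - 2) • gradient v x,
              gradient (fun y => v y - u y ^ p * v y ^ (1 - p)) x⟫ := by
  refine ⟨p * (min (p-1) 1 * 2^(1-p)), ?_, ?_⟩
  · have h1 : 0 < min (p-1) 1 := lt_min (by linarith) one_pos
    have h2 : (0:ℝ) < 2^(1-p) := rpow_pos_of_pos (by norm_num) _
    positivity
  intro Ω hΩ u v hu hv hupos hvpos x hx
  have hxn : Ω ∈ nhds x := hΩ.mem_nhds hx
  have hud : DifferentiableAt ℝ u x := (hu.differentiableOn one_ne_zero).differentiableAt hxn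
  have hvd : DifferentiableAt ℝ v x := (hv.differentiableOn one_ne_zero).differentiableAt hxn
  have hU := hupos x hx
  have hV := hvpos x hx
  have hga : HasGradientAt u (gradient u x) x := hud.hasGradientAt
  have hgb : HasGradientAt v (gradient v x) x := hvd.hasGradientAt
  have h1 := (osv_grad p hga hgb hU hV).gradient
  have h2 := (osv_grad p hgb hga hV hU).gradient
  rw [h1, h2]
  have hag : gradient u x = u x • ((u x)⁻¹ • gradient u x) := by
    rw [smul_smul, mul_inv_cancel₀ hU.ne', one_smul]
  have hbh : gradient v x = v x • ((v x)⁻¹ • gradient v x) := by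
    rw [smul_smul, mul_inv_cancel₀ hV.ne', one_smul]
  set g := (u x)⁻¹ • gradient u x with hgdef
  set h := (v x)⁻¹ • gradient v x with hhdef
  rw [hag, hbh]
  rw [osv_term hp hU hV g h, osv_term hp hV hU h g]
  have hB1 := osv_B hp g h
  have hB2 := osv_B hp h g
  have hG := osv_G hp g h
  have hUp : (0:ℝ) < u x ^ p := rpow_pos_of_pos hU _
  have hVp : (0:ℝ) < v x ^ p := rpow_pos_of_pos hV _
  have hmin0 : 0 ≤ min (u x ^ p) (v x ^ p) := le_min hUp.le hVp.le
  have hm1 : min (u x ^ p) (v x ^ p) ≤ u x ^ p := min_le_left _ _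
  have hm2 : min (u x ^ p) (v x ^ p) ≤ v x ^ p := min_le_right _ _
  have c2 := mul_le_mul_of_nonneg_left hG hmin0
  nlinarith [c2, mul_le_mul_of_nonneg_right hm1 hB1, mul_le_mul_of_nonneg_right hm2 hB2,
    mul_nonneg hmin0 hB1, mul_nonneg hmin0 hB2]
end

section
/- Let N ≥ 3, 1 < p < N/2, 0 ≤ γ₁ < (N−p)/p < γ₂, 0 < R₀ < 1 and c₀, C₀ > 0. Let u : ℝ^N → [0,∞) be measurable with c₀|x|^{−γ₁} ≤ u(x) ≤ C₀|x|^{−γ₁} for all 0 < |x| ≤ R₀ and c₀(1+|x|^{γ₂})^{−1} ≤ u(x) ≤ C₀(1+|x|^{γ₂})^{−1} for all |x| ≥ R₀. Then for every R > 0 there exist constants C₁, C₂ > 0 such that C₁ ≤ ∫_{ℝ^N} u(y)^p/|x−y|^{2p} dy ≤ C₂·max{|x|^{−p}, 1} for all x with 0 < |x| ≤ R. -/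
open MeasureTheory

open Metric
open scoped ENNReal NNReal

lemma rpow_aux {r t : ℝ} (hr : 0 < r) (ht : 0 < t) (s c : ℝ) (k : ℕ) :
    (r * t ^ (k+1)) ^ (-s) * (r * t ^ k) ^ c =
      r ^ (c - s) * t ^ (-s) * (t ^ (c - s)) ^ (k : ℝ) := by
  rw [Real.mul_rpow hr.le (pow_nonneg ht.le _), Real.mul_rpow hr.le (pow_nonneg ht.le _),
    ← Real.rpow_natCast t (k+1), ← Real.rpow_natCast t k,
    ← Real.rpow_mul ht.le, ← Real.rpow_mul ht.le, ← Real.rpow_mul ht.le,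
    mul_mul_mul_comm, ← Real.rpow_add hr, ← Real.rpow_add ht, mul_assoc, ← Real.rpow_add ht]
  congr 2
  · ring
  · push_cast; ring

lemma ball_lintegral_rpow {N : ℕ} (hN : 0 < N) {s : ℝ} (hs0 : 0 ≤ s) (hsN : s < N) :
    ∃ M : ℝ≥0∞, M ≠ ∞ ∧ ∀ r : ℝ, 0 < r →
      ∫⁻ y in ball (0 : EuclideanSpace ℝ (Fin N)) r, ENNReal.ofReal (‖y‖ ^ (-s)) ≤
        ENNReal.ofReal (r ^ ((N:ℝ) - s)) * M := by
  set E := EuclideanSpace ℝ (Fin N)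
  haveI : Nonempty (Fin N) := ⟨⟨0, hN⟩⟩
  haveI : Nontrivial E := inferInstanceAs (Nontrivial (EuclideanSpace ℝ (Fin N)))
  haveI : NullSingletonClass (volume : Measure E) := inferInstanceAs (NullSingletonClass (volume : Measure (EuclideanSpace ℝ (Fin N))))
  set B := volume (ball (0 : E) 1) with hBdef
  have hB : B ≠ ∞ := measure_ball_lt_top.ne
  set t : ℝ := 2⁻¹ with htdef
  have ht0 : (0:ℝ) < t := by norm_num
  have ht1 : t < 1 := by norm_num
  set q : ℝ := t ^ ((N:ℝ) - s) with hqdef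
  have hq0 : 0 ≤ q := Real.rpow_nonneg ht0.le _
  have hq1 : q < 1 := Real.rpow_lt_one ht0.le ht1 (by push_cast; linarith)
  have hq1' : ENNReal.ofReal q < 1 := by
    rw [← ENNReal.ofReal_one]; exact (ENNReal.ofReal_lt_ofReal_iff_of_nonneg hq0).2 hq1
  refine ⟨ENNReal.ofReal (t ^ (-s)) * B * (1 - ENNReal.ofReal q)⁻¹, ?_, ?_⟩
  · refine ENNReal.mul_ne_top (ENNReal.mul_ne_top ENNReal.ofReal_ne_top hB) ?_
    rw [ENNReal.inv_ne_top]
    exact (tsub_pos_of_lt hq1').ne'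
  intro r hr
  have hA : ∀ k : ℕ, MeasurableSet (ball (0:E) (r * t ^ k) \ ball (0:E) (r * t ^ (k+1))) :=
    fun k => measurableSet_ball.diff measurableSet_ball
  have hrt : ∀ k : ℕ, 0 < r * t ^ k := fun k => mul_pos hr (pow_pos ht0 k)
  have hU : ball (0:E) r \ {0} = ⋃ k, (ball (0:E) (r * t ^ k) \ ball (0:E) (r * t ^ (k+1))) := by
    ext y
    simp only [Set.mem_diff, mem_ball_zero_iff, Set.mem_singleton_iff, Set.mem_iUnion]
    constructor
    · rintro ⟨hyr, hy0⟩
      have hy0' : 0 < ‖y‖ := norm_pos_iff.2 hy0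
      have hex : ∃ n : ℕ, r * t ^ (n+1) ≤ ‖y‖ := by
        obtain ⟨n, hn⟩ := exists_pow_lt_of_lt_one (div_pos hy0' hr) ht1
        have h1 : t ^ (n+1) ≤ t ^ n := pow_le_pow_of_le_one ht0.le ht1.le (Nat.le_succ n)
        have h2 : t ^ n * r < ‖y‖ := (lt_div_iff₀ hr).1 hn
        exact ⟨n, by nlinarith⟩
      classical
      refine ⟨Nat.find hex, ?_, not_lt.2 (Nat.find_spec hex)⟩
      rcases Nat.eq_zero_or_pos (Nat.find hex) with h0 | hpos
      · rw [h0]; simpa using hyr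
      · obtain ⟨m, hm⟩ := Nat.exists_eq_succ_of_ne_zero hpos.ne'
        rw [hm]
        have hmin := Nat.find_min hex (m := m) (by omega)
        push_neg at hmin
        simpa [Nat.succ_eq_add_one] using hmin
    · rintro ⟨k, hk, hk'⟩
      push_neg at hk'
      have h1 : r * t ^ k ≤ r := by
        nlinarith [pow_le_one₀ ht0.le ht1.le (n := k)]
      refine ⟨lt_of_lt_of_le hk h1, ?_⟩
      intro h
      rw [h] at hk'
      simp only [norm_zero] at hk'
      nlinarith [hrt (k+1)]
  have hnull : (ball (0:E) r : Set _) =ᵐ[volume] (ball (0:E) r \ {0} : Set _) := by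
    exact (diff_ae_eq_self.2 (measure_mono_null Set.inter_subset_right (measure_singleton 0))).symm
  calc ∫⁻ y in ball (0:E) r, ENNReal.ofReal (‖y‖ ^ (-s))
      = ∫⁻ y in ball (0:E) r \ {0}, ENNReal.ofReal (‖y‖ ^ (-s)) := setLIntegral_congr hnull
    _ = ∑' k : ℕ, ∫⁻ y in ball (0:E) (r * t ^ k) \ ball (0:E) (r * t ^ (k+1)),
          ENNReal.ofReal (‖y‖ ^ (-s)) := by
        rw [hU]
        refine lintegral_iUnion hA ?_ _
        have key : ∀ i j : ℕ, i < j →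
            Disjoint (ball (0:E) (r * t ^ i) \ ball (0:E) (r * t ^ (i+1)))
              (ball (0:E) (r * t ^ j) \ ball (0:E) (r * t ^ (j+1))) := by
          intro i j hlt
          refine Set.disjoint_left.2 ?_
          rintro y ⟨hy1, hy2⟩ ⟨hy3, hy4⟩
          rw [mem_ball_zero_iff] at hy3
          apply hy2
          rw [mem_ball_zero_iff]
          calc ‖y‖ < r * t ^ j := hy3
            _ ≤ r * t ^ (i+1) := by
              apply mul_le_mul_of_nonneg_left _ hr.le
              exact pow_le_pow_of_le_one ht0.le ht1.le (by omega)
        intro i j hij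
        rcases hij.lt_or_gt with h | h
        · exact key i j h
        · exact (key j i h).symm
    _ ≤ ∑' k : ℕ, (ENNReal.ofReal (r ^ ((N:ℝ) - s)) * (ENNReal.ofReal (t ^ (-s)) * B))
          * (ENNReal.ofReal q) ^ k := by
        refine ENNReal.tsum_le_tsum fun k => ?_
        have step1 : ∫⁻ y in ball (0:E) (r * t ^ k) \ ball (0:E) (r * t ^ (k+1)),
            ENNReal.ofReal (‖y‖ ^ (-s)) ≤
            ENNReal.ofReal ((r * t ^ (k+1)) ^ (-s)) * volume (ball (0:E) (r * t ^ k)) := by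
          calc ∫⁻ y in ball (0:E) (r * t ^ k) \ ball (0:E) (r * t ^ (k+1)),
              ENNReal.ofReal (‖y‖ ^ (-s))
              ≤ ∫⁻ _ in ball (0:E) (r * t ^ k) \ ball (0:E) (r * t ^ (k+1)),
                ENNReal.ofReal ((r * t ^ (k+1)) ^ (-s)) := by
                refine setLIntegral_mono measurable_const fun y hy => ?_
                rcases hy with ⟨_, hy2⟩
                rw [mem_ball_zero_iff, not_lt] at hy2
                exact ENNReal.ofReal_le_ofReal
                  (Real.rpow_le_rpow_of_nonpos (hrt (k+1)) hy2 (neg_nonpos.2 hs0))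
            _ = ENNReal.ofReal ((r * t ^ (k+1)) ^ (-s)) *
                volume (ball (0:E) (r * t ^ k) \ ball (0:E) (r * t ^ (k+1))) :=
                setLIntegral_const _ _
            _ ≤ _ := mul_le_mul_right (measure_mono Set.diff_subset) _
        refine step1.trans ?_
        rw [Measure.addHaar_ball _ _ (hrt k).le, finrank_euclideanSpace_fin]
        have hpow : ((r * t ^ k) ^ N : ℝ) = (r * t ^ k) ^ ((N:ℕ):ℝ) :=
          (Real.rpow_natCast _ N).symm
        rw [hpow, ← mul_assoc, ← ENNReal.ofReal_mul (Real.rpow_nonneg (hrt (k+1)).le _),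
          rpow_aux hr ht0 s ((N:ℕ):ℝ) k]
        have heq : ENNReal.ofReal (r ^ ((N:ℝ) - s) * t ^ (-s) * (t ^ ((N:ℝ) - s)) ^ (k:ℝ)) =
            ENNReal.ofReal (r ^ ((N:ℝ) - s)) * ENNReal.ofReal (t ^ (-s)) *
              (ENNReal.ofReal q) ^ k := by
          rw [ENNReal.ofReal_mul (by positivity), ENNReal.ofReal_mul (by positivity),
            ← hqdef, ← ENNReal.ofReal_pow hq0, ← Real.rpow_natCast q k]
        push_cast at heq
        rw [heq]
        exact le_of_eq (by ring)
    _ = (ENNReal.ofReal (r ^ ((N:ℝ) - s)) * (ENNReal.ofReal (t ^ (-s)) * B))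
          * (1 - ENNReal.ofReal q)⁻¹ := by
        rw [ENNReal.tsum_mul_left, ENNReal.tsum_geometric]
    _ = ENNReal.ofReal (r ^ ((N:ℝ) - s)) *
          (ENNReal.ofReal (t ^ (-s)) * B * (1 - ENNReal.ofReal q)⁻¹) := by ring



lemma rpow_aux2 {r t : ℝ} (hr : 0 < r) (ht : 0 < t) (s c : ℝ) (k : ℕ) :
    (r * t ^ k) ^ (-s) * (r * t ^ (k+1)) ^ c =
      r ^ (c - s) * t ^ c * (t ^ (c - s)) ^ (k : ℝ) := by
  rw [Real.mul_rpow hr.le (pow_nonneg ht.le _), Real.mul_rpow hr.le (pow_nonneg ht.le _),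
    ← Real.rpow_natCast t (k+1), ← Real.rpow_natCast t k,
    ← Real.rpow_mul ht.le, ← Real.rpow_mul ht.le, ← Real.rpow_mul ht.le,
    mul_mul_mul_comm, ← Real.rpow_add hr, ← Real.rpow_add ht, mul_assoc, ← Real.rpow_add ht]
  congr 2
  · ring
  · push_cast; ring

lemma compl_ball_lintegral_rpow {N : ℕ} (hN : 0 < N) {s : ℝ} (hsN : (N:ℝ) < s) :
    ∃ M : ℝ≥0∞, M ≠ ∞ ∧ ∀ r : ℝ, 0 < r →
      ∫⁻ y in (ball (0 : EuclideanSpace ℝ (Fin N)) r)ᶜ, ENNReal.ofReal (‖y‖ ^ (-s)) ≤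
        ENNReal.ofReal (r ^ ((N:ℝ) - s)) * M := by
  set E := EuclideanSpace ℝ (Fin N)
  haveI : Nonempty (Fin N) := ⟨⟨0, hN⟩⟩
  haveI : Nontrivial E := inferInstanceAs (Nontrivial (EuclideanSpace ℝ (Fin N)))
  set B := volume (ball (0 : E) 1) with hBdef
  have hB : B ≠ ∞ := measure_ball_lt_top.ne
  set t : ℝ := 2 with htdef
  have ht0 : (0:ℝ) < t := by norm_num
  have ht1 : (1:ℝ) < t := by norm_num
  set q : ℝ := t ^ ((N:ℝ) - s) with hqdef
  have hq0 : 0 ≤ q := Real.rpow_nonneg ht0.le _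
  have hq1 : q < 1 := Real.rpow_lt_one_of_one_lt_of_neg ht1 (by linarith)
  have hq1' : ENNReal.ofReal q < 1 := by
    rw [← ENNReal.ofReal_one]; exact (ENNReal.ofReal_lt_ofReal_iff_of_nonneg hq0).2 hq1
  refine ⟨ENNReal.ofReal (t ^ ((N:ℕ):ℝ)) * B * (1 - ENNReal.ofReal q)⁻¹, ?_, ?_⟩
  · refine ENNReal.mul_ne_top (ENNReal.mul_ne_top ENNReal.ofReal_ne_top hB) ?_
    rw [ENNReal.inv_ne_top]
    exact (tsub_pos_of_lt hq1').ne'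
  intro r hr
  have hs0 : 0 ≤ s := le_trans (by positivity) hsN.le
  have hA : ∀ k : ℕ, MeasurableSet (ball (0:E) (r * t ^ (k+1)) \ ball (0:E) (r * t ^ k)) :=
    fun k => measurableSet_ball.diff measurableSet_ball
  have hrt : ∀ k : ℕ, 0 < r * t ^ k := fun k => mul_pos hr (pow_pos ht0 k)
  have hU : (ball (0:E) r)ᶜ = ⋃ k, (ball (0:E) (r * t ^ (k+1)) \ ball (0:E) (r * t ^ k)) := by
    ext y
    simp only [Set.mem_compl_iff, Set.mem_diff, mem_ball_zero_iff, Set.mem_iUnion, not_lt]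
    constructor
    · intro hyr
      have hex : ∃ n : ℕ, ‖y‖ < r * t ^ (n+1) := by
        obtain ⟨n, hn⟩ := pow_unbounded_of_one_lt (‖y‖ / r) ht1
        have h1 : t ^ n ≤ t ^ (n+1) := pow_le_pow_right₀ ht1.le (Nat.le_succ n)
        have h2 : ‖y‖ < r * t ^ n := by
          rw [div_lt_iff₀ hr] at hn; linarith [hn]
        exact ⟨n, by nlinarith⟩
      classical
      refine ⟨Nat.find hex, Nat.find_spec hex, ?_⟩
      rcases Nat.eq_zero_or_pos (Nat.find hex) with h0 | hpos
      · rw [h0]; simpa using hyr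
      · obtain ⟨m, hm⟩ := Nat.exists_eq_succ_of_ne_zero hpos.ne'
        rw [hm]
        have hmin := Nat.find_min hex (m := m) (by omega)
        push_neg at hmin
        simpa [Nat.succ_eq_add_one] using hmin
    · rintro ⟨k, hk, hk'⟩
      have h1 : r ≤ r * t ^ k := by
        nlinarith [one_le_pow₀ ht1.le (n := k)]
      linarith
  calc ∫⁻ y in (ball (0:E) r)ᶜ, ENNReal.ofReal (‖y‖ ^ (-s))
      = ∑' k : ℕ, ∫⁻ y in ball (0:E) (r * t ^ (k+1)) \ ball (0:E) (r * t ^ k),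
          ENNReal.ofReal (‖y‖ ^ (-s)) := by
        rw [hU]
        refine lintegral_iUnion hA ?_ _
        have key : ∀ i j : ℕ, i < j →
            Disjoint (ball (0:E) (r * t ^ (i+1)) \ ball (0:E) (r * t ^ i))
              (ball (0:E) (r * t ^ (j+1)) \ ball (0:E) (r * t ^ j)) := by
          intro i j hlt
          refine Set.disjoint_left.2 ?_
          rintro y ⟨hy1, hy2⟩ ⟨hy3, hy4⟩
          rw [mem_ball_zero_iff] at hy1
          apply hy4
          rw [mem_ball_zero_iff]
          calc ‖y‖ < r * t ^ (i+1) := hy1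
            _ ≤ r * t ^ j := by
              apply mul_le_mul_of_nonneg_left _ hr.le
              exact pow_le_pow_right₀ ht1.le (by omega)
        intro i j hij
        rcases hij.lt_or_gt with h | h
        · exact key i j h
        · exact (key j i h).symm
    _ ≤ ∑' k : ℕ, (ENNReal.ofReal (r ^ ((N:ℝ) - s)) * (ENNReal.ofReal (t ^ ((N:ℕ):ℝ)) * B))
          * (ENNReal.ofReal q) ^ k := by
        refine ENNReal.tsum_le_tsum fun k => ?_
        have step1 : ∫⁻ y in ball (0:E) (r * t ^ (k+1)) \ ball (0:E) (r * t ^ k),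
            ENNReal.ofReal (‖y‖ ^ (-s)) ≤
            ENNReal.ofReal ((r * t ^ k) ^ (-s)) * volume (ball (0:E) (r * t ^ (k+1))) := by
          calc ∫⁻ y in ball (0:E) (r * t ^ (k+1)) \ ball (0:E) (r * t ^ k),
              ENNReal.ofReal (‖y‖ ^ (-s))
              ≤ ∫⁻ _ in ball (0:E) (r * t ^ (k+1)) \ ball (0:E) (r * t ^ k),
                ENNReal.ofReal ((r * t ^ k) ^ (-s)) := by
                refine setLIntegral_mono measurable_const fun y hy => ?_
                rcases hy with ⟨_, hy2⟩
                rw [mem_ball_zero_iff, not_lt] at hy2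
                exact ENNReal.ofReal_le_ofReal
                  (Real.rpow_le_rpow_of_nonpos (hrt k) hy2 (neg_nonpos.2 hs0))
            _ = ENNReal.ofReal ((r * t ^ k) ^ (-s)) *
                volume (ball (0:E) (r * t ^ (k+1)) \ ball (0:E) (r * t ^ k)) :=
                setLIntegral_const _ _
            _ ≤ _ := mul_le_mul_right (measure_mono Set.diff_subset) _
        refine step1.trans ?_
        rw [Measure.addHaar_ball _ _ (hrt (k+1)).le, finrank_euclideanSpace_fin]
        have hpow : ((r * t ^ (k+1)) ^ N : ℝ) = (r * t ^ (k+1)) ^ ((N:ℕ):ℝ) :=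
          (Real.rpow_natCast _ N).symm
        rw [hpow, ← mul_assoc, ← ENNReal.ofReal_mul (Real.rpow_nonneg (hrt k).le _),
          rpow_aux2 hr ht0 s ((N:ℕ):ℝ) k]
        have heq : ENNReal.ofReal (r ^ ((N:ℝ) - s) * t ^ ((N:ℕ):ℝ) * (t ^ ((N:ℝ) - s)) ^ (k:ℝ)) =
            ENNReal.ofReal (r ^ ((N:ℝ) - s)) * ENNReal.ofReal (t ^ ((N:ℕ):ℝ)) *
              (ENNReal.ofReal q) ^ k := by
          rw [ENNReal.ofReal_mul (by positivity), ENNReal.ofReal_mul (by positivity),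
            ← hqdef, ← ENNReal.ofReal_pow hq0, ← Real.rpow_natCast q k]
        push_cast at heq
        rw [heq]
        exact le_of_eq (by ring)
    _ = (ENNReal.ofReal (r ^ ((N:ℝ) - s)) * (ENNReal.ofReal (t ^ ((N:ℕ):ℝ)) * B))
          * (1 - ENNReal.ofReal q)⁻¹ := by
        rw [ENNReal.tsum_mul_left, ENNReal.tsum_geometric]
    _ = ENNReal.ofReal (r ^ ((N:ℝ) - s)) *
          (ENNReal.ofReal (t ^ ((N:ℕ):ℝ)) * B * (1 - ENNReal.ofReal q)⁻¹) := by ring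

lemma measurable_rpow_c (c : ℝ) : Measurable fun x : ℝ => x ^ c := by measurability

lemma translate_lintegral {N : ℕ} (x : EuclideanSpace ℝ (Fin N)) (ρ : ℝ) (b : ℝ) :
    ∫⁻ y in ball x ρ, ENNReal.ofReal (‖x - y‖ ^ (-b)) =
      ∫⁻ z in ball (0 : EuclideanSpace ℝ (Fin N)) ρ, ENNReal.ofReal (‖z‖ ^ (-b)) := by
  rw [← lintegral_indicator measurableSet_ball, ← lintegral_indicator measurableSet_ball]
  have heq : ∀ y : EuclideanSpace ℝ (Fin N), (ball x ρ).indicator (fun y => ENNReal.ofReal (‖x - y‖ ^ (-b))) y =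
      (ball (0:EuclideanSpace ℝ (Fin N)) ρ).indicator (fun z => ENNReal.ofReal (‖z‖ ^ (-b))) (y - x) := by
    intro y
    by_cases hy : y ∈ ball x ρ
    · rw [Set.indicator_of_mem hy, Set.indicator_of_mem, norm_sub_rev]
      rw [mem_ball_zero_iff]
      exact mem_ball_iff_norm.1 hy
    · rw [Set.indicator_of_notMem hy, Set.indicator_of_notMem]
      intro hmem
      rw [mem_ball_zero_iff] at hmem
      exact hy (mem_ball_iff_norm.2 hmem)
  rw [lintegral_congr heq]
  simpa [sub_eq_add_neg] using lintegral_add_right_eq_self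
    ((ball (0:EuclideanSpace ℝ (Fin N)) ρ).indicator (fun z => ENNReal.ofReal (‖z‖ ^ (-b)))) (-x)

set_option maxHeartbeats 2000000 in
/-- Estimate (2.15) in Remark 2.7: under the sharp two-sided decay bounds on `u`,
for every `R > 0` there are `C₁, C₂ > 0` with
`C₁ ≤ (|x|^{-2p} ∗ u^p)(x) ≤ C₂ max{|x|^{-p}, 1}` on `B_R ∖ {0}`. -/
theorem stmt_18 (N : ℕ) (hN : 3 ≤ N) (p γ₁ γ₂ R₀ c₀ C₀ : ℝ)
    (hp1 : 1 < p) (hpN : p < (N : ℝ) / 2)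
    (hγ₁0 : 0 ≤ γ₁) (hγ₁ : γ₁ < ((N : ℝ) - p) / p) (hγ₂ : ((N : ℝ) - p) / p < γ₂)
    (hR₀0 : 0 < R₀) (hR₀1 : R₀ < 1) (hc₀ : 0 < c₀) (hC₀ : 0 < C₀)
    (u : EuclideanSpace ℝ (Fin N) → ℝ) (hum : Measurable u) (hu0 : ∀ y, 0 ≤ u y)
    (hin : ∀ x : EuclideanSpace ℝ (Fin N), 0 < ‖x‖ → ‖x‖ ≤ R₀ →
      c₀ * ‖x‖ ^ (-γ₁) ≤ u x ∧ u x ≤ C₀ * ‖x‖ ^ (-γ₁))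
    (hout : ∀ x : EuclideanSpace ℝ (Fin N), R₀ ≤ ‖x‖ →
      c₀ * (1 + ‖x‖ ^ γ₂)⁻¹ ≤ u x ∧ u x ≤ C₀ * (1 + ‖x‖ ^ γ₂)⁻¹) :
    ∀ R : ℝ, 0 < R → ∃ C₁ C₂ : ℝ, 0 < C₁ ∧ 0 < C₂ ∧
      ∀ x : EuclideanSpace ℝ (Fin N), 0 < ‖x‖ → ‖x‖ ≤ R →
        ENNReal.ofReal C₁ ≤ (∫⁻ y, ENNReal.ofReal (u y ^ p / ‖x - y‖ ^ (2 * p))) ∧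
        (∫⁻ y, ENNReal.ofReal (u y ^ p / ‖x - y‖ ^ (2 * p))) ≤
          ENNReal.ofReal (C₂ * max (‖x‖ ^ (-p)) 1) := by
  intro R hR
  have hN0 : 0 < N := by omega
  have hNr : (3:ℝ) ≤ (N:ℝ) := by exact_mod_cast hN
  have hp0 : 0 < p := by linarith
  have hb0 : (0:ℝ) < 2 * p := by linarith
  have hbN : 2 * p < (N:ℝ) := by linarith
  have hγ₁p : γ₁ * p < (N:ℝ) - p := by
    have := (lt_div_iff₀ hp0).1 hγ₁; linarith
  have hγ₂p : (N:ℝ) - p < γ₂ * p := by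
    have := (div_lt_iff₀ hp0).1 hγ₂; linarith
  have hγ₂0 : 0 < γ₂ := by nlinarith
  set a' : ℝ := max (γ₁ * p) ((N:ℝ) - 3/2 * p) with ha'def
  have ha1 : 0 ≤ a' := le_trans (by nlinarith) (le_max_right _ _)
  have ha2 : a' < (N:ℝ) - p := max_lt hγ₁p (by linarith)
  have ha3 : (N:ℝ) < a' + 2 * p := by
    have := le_max_right (γ₁ * p) ((N:ℝ) - 3/2 * p); linarith
  have ha4 : γ₁ * p ≤ a' := le_max_left _ _
  have haN : a' < (N:ℝ) := by linarith
  obtain ⟨Mb, hMbne, hMb⟩ := ball_lintegral_rpow hN0 (s := 2*p) hb0.le hbN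
  obtain ⟨Ma, hMane, hMa⟩ := ball_lintegral_rpow hN0 (s := a') ha1 haN
  obtain ⟨Mc, hMcne, hMc⟩ := compl_ball_lintegral_rpow hN0 (s := a' + 2*p) ha3
  obtain ⟨Md, hMdne, hMd⟩ := compl_ball_lintegral_rpow hN0 (s := γ₂*p + 2*p) (by linarith)
  set mb := Mb.toReal with hmbdef
  set ma := Ma.toReal with hmadef
  set mc := Mc.toReal with hmcdef
  set md := Md.toReal with hmddef
  have hmb0 : 0 ≤ mb := ENNReal.toReal_nonneg
  have hma0 : 0 ≤ ma := ENNReal.toReal_nonneg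
  have hmc0 : 0 ≤ mc := ENNReal.toReal_nonneg
  have hmd0 : 0 ≤ md := ENNReal.toReal_nonneg
  have hMb' : Mb = ENNReal.ofReal mb := (ENNReal.ofReal_toReal hMbne).symm
  have hMa' : Ma = ENNReal.ofReal ma := (ENNReal.ofReal_toReal hMane).symm
  have hMc' : Mc = ENNReal.ofReal mc := (ENNReal.ofReal_toReal hMcne).symm
  have hMd' : Md = ENNReal.ofReal md := (ENNReal.ofReal_toReal hMdne).symm
  set R' : ℝ := max R 1 with hR'def
  have hR'1 : 1 ≤ R' := le_max_right _ _
  have hRR' : R ≤ R' := le_max_left _ _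
  have hR'0 : 0 < R' := by linarith
  set M : ℝ := 2 * R' with hMdef
  have hM1 : 1 ≤ M := by simp only [hMdef]; linarith
  have hM0 : 0 < M := by linarith
  have hR₀M : R₀ ≤ M := by linarith
  set K₁ : ℝ := C₀ ^ p * M ^ a' with hK₁def
  have hK₁0 : 0 < K₁ := mul_pos (Real.rpow_pos_of_pos hC₀ p) (Real.rpow_pos_of_pos hM0 a')
  -- pointwise bound inside ball 0 M
  have hK : ∀ y : EuclideanSpace ℝ (Fin N), 0 < ‖y‖ → ‖y‖ ≤ M →
      u y ^ p ≤ K₁ * ‖y‖ ^ (-a') := by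
    intro y hy0 hyM
    have hya : 0 < ‖y‖ ^ (-a') := Real.rpow_pos_of_pos hy0 _
    by_cases hyR₀ : ‖y‖ ≤ R₀
    · obtain ⟨_, h2⟩ := hin y hy0 hyR₀
      have h3 : u y ^ p ≤ (C₀ * ‖y‖ ^ (-γ₁)) ^ p :=
        Real.rpow_le_rpow (hu0 y) h2 hp0.le
      have h4 : (C₀ * ‖y‖ ^ (-γ₁)) ^ p = C₀ ^ p * ‖y‖ ^ (-(γ₁ * p)) := by
        rw [Real.mul_rpow hC₀.le (Real.rpow_nonneg (norm_nonneg y) _),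
          ← Real.rpow_mul (norm_nonneg y)]
        ring_nf
      have h5 : ‖y‖ ^ (-(γ₁ * p)) = ‖y‖ ^ (a' - γ₁ * p) * ‖y‖ ^ (-a') := by
        rw [← Real.rpow_add hy0]; ring_nf
      have h6 : ‖y‖ ^ (a' - γ₁ * p) ≤ M ^ (a' - γ₁ * p) :=
        Real.rpow_le_rpow (norm_nonneg y) hyM (by linarith)
      have h7 : M ^ (a' - γ₁ * p) ≤ M ^ a' :=
        Real.rpow_le_rpow_of_exponent_le hM1 (by nlinarith)
      calc u y ^ p ≤ C₀ ^ p * (‖y‖ ^ (a' - γ₁ * p) * ‖y‖ ^ (-a')) := by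
            rw [← h5]; rw [h4] at h3; exact h3
        _ ≤ C₀ ^ p * (M ^ a' * ‖y‖ ^ (-a')) := by
            have : ‖y‖ ^ (a' - γ₁ * p) * ‖y‖ ^ (-a') ≤ M ^ a' * ‖y‖ ^ (-a') :=
              mul_le_mul_of_nonneg_right (h6.trans h7) hya.le
            exact mul_le_mul_of_nonneg_left this (Real.rpow_nonneg hC₀.le p)
        _ = K₁ * ‖y‖ ^ (-a') := by rw [hK₁def]; ring
    · push_neg at hyR₀
      obtain ⟨_, h2⟩ := hout y hyR₀.le
      have hinv : (1 + ‖y‖ ^ γ₂)⁻¹ ≤ 1 := by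
        rw [inv_le_one_iff₀]
        right
        have : (0:ℝ) ≤ ‖y‖ ^ γ₂ := Real.rpow_nonneg (norm_nonneg y) _
        linarith
      have h3 : u y ≤ C₀ := by nlinarith
      have h4 : u y ^ p ≤ C₀ ^ p := Real.rpow_le_rpow (hu0 y) h3 hp0.le
      have h5 : (1:ℝ) ≤ M ^ a' * ‖y‖ ^ (-a') := by
        have h6 : ‖y‖ ^ a' ≤ M ^ a' := Real.rpow_le_rpow (norm_nonneg y) hyM ha1
        have h7 : ‖y‖ ^ a' * ‖y‖ ^ (-a') = 1 := by
          rw [← Real.rpow_add hy0]; simp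
        nlinarith [Real.rpow_pos_of_pos hy0 a']
      calc u y ^ p ≤ C₀ ^ p := h4
        _ = C₀ ^ p * 1 := by ring
        _ ≤ C₀ ^ p * (M ^ a' * ‖y‖ ^ (-a')) :=
            mul_le_mul_of_nonneg_left h5 (Real.rpow_nonneg hC₀.le p)
        _ = K₁ * ‖y‖ ^ (-a') := by rw [hK₁def]; ring
  -- pointwise bound outside ball 0 M
  have hK2 : ∀ y : EuclideanSpace ℝ (Fin N), M ≤ ‖y‖ →
      u y ^ p ≤ C₀ ^ p * ‖y‖ ^ (-(γ₂ * p)) := by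
    intro y hyM
    have hy0 : 0 < ‖y‖ := lt_of_lt_of_le hM0 hyM
    obtain ⟨_, h2⟩ := hout y (le_trans hR₀M hyM)
    have hyg : 0 < ‖y‖ ^ γ₂ := Real.rpow_pos_of_pos hy0 _
    have hinv : (1 + ‖y‖ ^ γ₂)⁻¹ ≤ (‖y‖ ^ γ₂)⁻¹ := by
      apply inv_anti₀ hyg; linarith
    have h3 : u y ≤ C₀ * ‖y‖ ^ (-γ₂) := by
      rw [Real.rpow_neg (norm_nonneg y)]
      nlinarith
    have h4 : u y ^ p ≤ (C₀ * ‖y‖ ^ (-γ₂)) ^ p := Real.rpow_le_rpow (hu0 y) h3 hp0.le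
    rwa [Real.mul_rpow hC₀.le (Real.rpow_nonneg (norm_nonneg y) _),
      ← Real.rpow_mul (norm_nonneg y), show -γ₂ * p = -(γ₂ * p) by ring] at h4
  set e : ℝ := (N:ℝ) - a' - 2*p with hedef
  have he1 : -p < e := by simp only [hedef]; linarith
  have he2 : e < 0 := by simp only [hedef]; linarith
  have h4p : (0:ℝ) < 4 ^ (2*p) := Real.rpow_pos_of_pos (by norm_num) _
  set G : ℝ := K₁ * mb + K₁ * ma + K₁ * 4 ^ (2*p) * mc with hGdef
  have hG0 : 0 ≤ G := by
    have h1 := mul_nonneg hK₁0.le hmb0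
    have h2 := mul_nonneg hK₁0.le hma0
    have h3 := mul_nonneg (mul_nonneg hK₁0.le h4p.le) hmc0
    simp only [hGdef]; linarith
  set D4 : ℝ := C₀ ^ p * 2 ^ (2*p) * M ^ ((N:ℝ) - (γ₂*p + 2*p)) * md with hD4def
  have h2p2 : (0:ℝ) < 2 ^ (2*p) := Real.rpow_pos_of_pos (by norm_num) _
  have hD40 : 0 ≤ D4 := by
    have h1 : (0:ℝ) < C₀ ^ p := Real.rpow_pos_of_pos hC₀ _
    have h3 : (0:ℝ) < M ^ ((N:ℝ) - (γ₂*p + 2*p)) := Real.rpow_pos_of_pos hM0 _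
    have := mul_nonneg (mul_nonneg (mul_nonneg h1.le h2p2.le) h3.le) hmd0
    simpa [hD4def] using this
  set C₂ : ℝ := G * (2 ^ p * R' ^ (p + e)) + D4 + 1 with hC₂def
  have h2p0 : (0:ℝ) < 2 ^ p := Real.rpow_pos_of_pos (by norm_num) _
  have hC₂0 : 0 < C₂ := by
    have h1 : 0 ≤ G * (2 ^ p * R' ^ (p + e)) :=
      mul_nonneg hG0 (mul_nonneg h2p0.le (Real.rpow_pos_of_pos hR'0 _).le)
    simp only [hC₂def]; linarith
  -- lower bound constants
  set z : EuclideanSpace ℝ (Fin N) :=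
    (R + 3/2) • EuclideanSpace.single (⟨0, hN0⟩ : Fin N) (1:ℝ) with hzdef
  have hz : ‖z‖ = R + 3/2 := by
    rw [hzdef, norm_smul]
    have h1 : ‖EuclideanSpace.single (⟨0, hN0⟩ : Fin N) (1:ℝ)‖ = 1 := by
      simp [EuclideanSpace.norm_single]
    rw [h1, Real.norm_eq_abs, abs_of_pos (by linarith : (0:ℝ) < R + 3/2)]
    ring
  set c₁ : ℝ := c₀ * (1 + (R+2) ^ γ₂)⁻¹ with hc₁def
  have hc₁0 : 0 < c₁ := by
    have : (0:ℝ) < (R+2) ^ γ₂ := Real.rpow_pos_of_pos (by linarith) _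
    exact mul_pos hc₀ (inv_pos.2 (by linarith))
  set c₂ : ℝ := c₁ ^ p / (2*R+2) ^ (2*p) with hc₂def
  have hc₂0 : 0 < c₂ :=
    div_pos (Real.rpow_pos_of_pos hc₁0 _) (Real.rpow_pos_of_pos (by linarith) _)
  set v : ℝ := (volume (ball (0 : EuclideanSpace ℝ (Fin N)) (1/2:ℝ))).toReal with hvdef
  have hvpos : 0 < v := by
    rw [hvdef]
    exact ENNReal.toReal_pos (measure_ball_pos volume 0 (by norm_num)).ne' measure_ball_lt_top.ne
  refine ⟨c₂ * v, C₂, mul_pos hc₂0 hvpos, hC₂0, ?_⟩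
  intro x hx0 hxR
  set f : EuclideanSpace ℝ (Fin N) → ℝ≥0∞ :=
    fun y => ENNReal.ofReal (u y ^ p / ‖x - y‖ ^ (2 * p)) with hfdef
  have hfm : Measurable f := (((measurable_rpow_c p).comp hum).div
    ((measurable_rpow_c (2*p)).comp (measurable_const.sub measurable_id).norm)).ennreal_ofReal
  constructor
  · -- LOWER BOUND
    have hA : ∀ y ∈ ball z (1/2 : ℝ), ENNReal.ofReal c₂ ≤ f y := by
      intro y hy
      rw [mem_ball_iff_norm] at hy
      have h1 := abs_norm_sub_norm_le y z
      rw [hz] at h1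
      have h1' := abs_lt.1 (lt_of_le_of_lt h1 hy)
      have hylo : R + 1 < ‖y‖ := by linarith [h1'.1]
      have hyhi : ‖y‖ < R + 2 := by linarith [h1'.2]
      have hR₀y : R₀ ≤ ‖y‖ := by linarith
      obtain ⟨hl, _⟩ := hout y hR₀y
      have hyg : ‖y‖ ^ γ₂ ≤ (R+2) ^ γ₂ :=
        Real.rpow_le_rpow (norm_nonneg y) hyhi.le hγ₂0.le
      have hypos : (0:ℝ) < ‖y‖ ^ γ₂ := Real.rpow_pos_of_pos (by linarith) _
      have hu1 : c₁ ≤ u y := by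
        refine le_trans ?_ hl
        rw [hc₁def]
        refine mul_le_mul_of_nonneg_left ?_ hc₀.le
        exact inv_anti₀ (by linarith) (by linarith)
      have hxy_ub : ‖x - y‖ ≤ 2*R + 2 := le_trans (norm_sub_le x y) (by linarith)
      have hxy_lb : 0 < ‖x - y‖ := by
        have h2 := norm_sub_norm_le y x
        rw [norm_sub_rev y x] at h2
        linarith
      have hnum : c₁ ^ p ≤ u y ^ p := Real.rpow_le_rpow hc₁0.le hu1 hp0.le
      have hden : ‖x - y‖ ^ (2*p) ≤ (2*R+2) ^ (2*p) :=
        Real.rpow_le_rpow (norm_nonneg _) hxy_ub hb0.le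
      have hdenpos : 0 < ‖x - y‖ ^ (2*p) := Real.rpow_pos_of_pos hxy_lb _
      rw [hfdef]
      refine ENNReal.ofReal_le_ofReal ?_
      rw [hc₂def]
      exact div_le_div₀ (Real.rpow_nonneg (hu0 y) p) hnum hdenpos hden
    calc ENNReal.ofReal (c₂ * v)
        = ENNReal.ofReal c₂ * volume (ball (0 : EuclideanSpace ℝ (Fin N)) (1/2:ℝ)) := by
          rw [ENNReal.ofReal_mul hc₂0.le, hvdef, ENNReal.ofReal_toReal measure_ball_lt_top.ne]
      _ = ENNReal.ofReal c₂ * volume (ball z (1/2:ℝ)) :=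
          congrArg _ (Measure.addHaar_ball_center volume z (1/2:ℝ)).symm
      _ = ∫⁻ _ in ball z (1/2:ℝ), ENNReal.ofReal c₂ := (setLIntegral_const _ _).symm
      _ ≤ ∫⁻ y in ball z (1/2:ℝ), f y := setLIntegral_mono hfm hA
      _ ≤ ∫⁻ y, f y := setLIntegral_le_lintegral _ _
  · -- UPPER BOUND
    set ρ : ℝ := ‖x‖ / 2 with hρdef
    have hρ0 : 0 < ρ := by rw [hρdef]; linarith
    have hρR' : ρ ≤ R' := by rw [hρdef]; linarith
    have hρe0 : (0:ℝ) ≤ ρ ^ e := (Real.rpow_pos_of_pos hρ0 e).le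
    set S₃ : Set (EuclideanSpace ℝ (Fin N)) :=
      ball (0 : EuclideanSpace ℝ (Fin N)) M \
        (ball x ρ ∪ ball (0 : EuclideanSpace ℝ (Fin N)) ρ) with hS₃def
    -- region 1
    have hS1 : ∫⁻ y in ball x ρ, f y ≤ ENNReal.ofReal (K₁ * mb * ρ ^ e) := by
      have hgm : Measurable fun y : EuclideanSpace ℝ (Fin N) =>
          ENNReal.ofReal (K₁ * ρ ^ (-a')) * ENNReal.ofReal (‖x - y‖ ^ (-(2*p))) :=
        measurable_const.mul (((measurable_rpow_c (-(2*p))).comp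
          (measurable_const.sub measurable_id).norm).ennreal_ofReal)
      have hpt : ∀ y ∈ ball x ρ, f y ≤
          ENNReal.ofReal (K₁ * ρ ^ (-a')) * ENNReal.ofReal (‖x - y‖ ^ (-(2*p))) := by
        intro y hy
        by_cases hxy : y = x
        · rw [hfdef]
          simp only [hxy, sub_self, norm_zero, Real.zero_rpow hb0.ne', div_zero,
            ENNReal.ofReal_zero]
          exact zero_le'
        · have hxy0 : 0 < ‖x - y‖ := by
            rw [norm_pos_iff, sub_ne_zero]; exact fun h => hxy h.symm
          rw [mem_ball_iff_norm] at hy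
          have hy' : ‖x - y‖ < ρ := by rwa [norm_sub_rev y x] at hy
          have h1 := norm_sub_norm_le x y
          have hylo : ρ ≤ ‖y‖ := by
            rw [hρdef] at hy' ⊢; linarith
          have h2 := norm_sub_norm_le y x
          rw [norm_sub_rev y x] at h2
          have hyhi : ‖y‖ ≤ M := by
            rw [hρdef] at hy'; rw [hMdef]; linarith
          have hy0' : 0 < ‖y‖ := lt_of_lt_of_le hρ0 hylo
          have hbound : u y ^ p ≤ K₁ * ρ ^ (-a') := by
            refine (hK y hy0' hyhi).trans ?_
            refine mul_le_mul_of_nonneg_left ?_ hK₁0.le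
            exact Real.rpow_le_rpow_of_nonpos hρ0 hylo (neg_nonpos.2 ha1)
          rw [hfdef]
          simp only []
          rw [div_eq_mul_inv, ← Real.rpow_neg (norm_nonneg _) (2*p),
            ENNReal.ofReal_mul (Real.rpow_nonneg (hu0 y) p)]
          exact mul_le_mul' (ENNReal.ofReal_le_ofReal hbound) le_rfl
      calc ∫⁻ y in ball x ρ, f y
          ≤ ∫⁻ y in ball x ρ, ENNReal.ofReal (K₁ * ρ ^ (-a')) *
              ENNReal.ofReal (‖x - y‖ ^ (-(2*p))) := setLIntegral_mono hgm hpt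
        _ = ENNReal.ofReal (K₁ * ρ ^ (-a')) *
              ∫⁻ y in ball x ρ, ENNReal.ofReal (‖x - y‖ ^ (-(2*p))) :=
            lintegral_const_mul _ (((measurable_rpow_c (-(2*p))).comp
              (measurable_const.sub measurable_id).norm).ennreal_ofReal)
        _ = ENNReal.ofReal (K₁ * ρ ^ (-a')) *
              ∫⁻ w in ball (0 : EuclideanSpace ℝ (Fin N)) ρ,
                ENNReal.ofReal (‖w‖ ^ (-(2*p))) := by
            rw [translate_lintegral x ρ (2*p)]
        _ ≤ ENNReal.ofReal (K₁ * ρ ^ (-a')) *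
              (ENNReal.ofReal (ρ ^ ((N:ℝ) - 2*p)) * Mb) := mul_le_mul_right (hMb ρ hρ0) _
        _ = ENNReal.ofReal (K₁ * mb * ρ ^ e) := by
            rw [hMb', ← ENNReal.ofReal_mul (by positivity), ← ENNReal.ofReal_mul (by positivity)]
            congr 1
            have hcomb : ρ ^ (-a') * ρ ^ ((N:ℝ) - 2*p) = ρ ^ e := by
              rw [← Real.rpow_add hρ0]; congr 1; rw [hedef]; ring
            calc K₁ * ρ ^ (-a') * (ρ ^ ((N:ℝ) - 2*p) * mb)
                = K₁ * (ρ ^ (-a') * ρ ^ ((N:ℝ) - 2*p)) * mb := by ring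
              _ = K₁ * mb * ρ ^ e := by rw [hcomb]; ring
    -- region 2
    have h0ae : ∀ᵐ (y : EuclideanSpace ℝ (Fin N)) ∂volume, y ≠ 0 := by
      haveI : Nonempty (Fin N) := ⟨⟨0, hN0⟩⟩
      refine ae_iff.2 ?_
      simpa using measure_singleton (0 : EuclideanSpace ℝ (Fin N))
    have hS2 : ∫⁻ y in ball (0 : EuclideanSpace ℝ (Fin N)) ρ, f y ≤
        ENNReal.ofReal (K₁ * ma * ρ ^ e) := by
      have hgm : Measurable fun y : EuclideanSpace ℝ (Fin N) =>
          ENNReal.ofReal (K₁ * ρ ^ (-(2*p))) * ENNReal.ofReal (‖y‖ ^ (-a')) :=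
        measurable_const.mul (((measurable_rpow_c (-a')).comp measurable_norm).ennreal_ofReal)
      have hpt : ∀ᵐ (y : EuclideanSpace ℝ (Fin N)) ∂volume,
          y ∈ ball (0 : EuclideanSpace ℝ (Fin N)) ρ → f y ≤
          ENNReal.ofReal (K₁ * ρ ^ (-(2*p))) * ENNReal.ofReal (‖y‖ ^ (-a')) := by
        filter_upwards [h0ae] with y hy0 hys
        rw [mem_ball_zero_iff] at hys
        have hy0' : 0 < ‖y‖ := norm_pos_iff.2 hy0
        have h1 := norm_sub_norm_le x y
        have hxylo : ρ ≤ ‖x - y‖ := by rw [hρdef] at hys ⊢; linarith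
        have hyM : ‖y‖ ≤ M := by rw [hρdef] at hys; rw [hMdef]; linarith
        have hbound1 : u y ^ p ≤ K₁ * ‖y‖ ^ (-a') := hK y hy0' hyM
        have hbound2 : ‖x - y‖ ^ (-(2*p)) ≤ ρ ^ (-(2*p)) :=
          Real.rpow_le_rpow_of_nonpos hρ0 hxylo (by linarith)
        rw [hfdef]
        simp only []
        rw [div_eq_mul_inv, ← Real.rpow_neg (norm_nonneg _) (2*p),
          ENNReal.ofReal_mul (Real.rpow_nonneg (hu0 y) p)]
        calc ENNReal.ofReal (u y ^ p) * ENNReal.ofReal (‖x - y‖ ^ (-(2*p)))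
            ≤ ENNReal.ofReal (K₁ * ‖y‖ ^ (-a')) * ENNReal.ofReal (ρ ^ (-(2*p))) :=
              mul_le_mul' (ENNReal.ofReal_le_ofReal hbound1) (ENNReal.ofReal_le_ofReal hbound2)
          _ = ENNReal.ofReal (K₁ * ρ ^ (-(2*p))) * ENNReal.ofReal (‖y‖ ^ (-a')) := by
              rw [← ENNReal.ofReal_mul (by positivity), ← ENNReal.ofReal_mul (by positivity)]
              congr 1
              ring
      calc ∫⁻ y in ball (0 : EuclideanSpace ℝ (Fin N)) ρ, f y
          ≤ ∫⁻ y in ball (0 : EuclideanSpace ℝ (Fin N)) ρ,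
              ENNReal.ofReal (K₁ * ρ ^ (-(2*p))) * ENNReal.ofReal (‖y‖ ^ (-a')) :=
            setLIntegral_mono_ae hgm.aemeasurable hpt
        _ = ENNReal.ofReal (K₁ * ρ ^ (-(2*p))) *
              ∫⁻ y in ball (0 : EuclideanSpace ℝ (Fin N)) ρ, ENNReal.ofReal (‖y‖ ^ (-a')) :=
            lintegral_const_mul _ (((measurable_rpow_c (-a')).comp
              measurable_norm).ennreal_ofReal)
        _ ≤ ENNReal.ofReal (K₁ * ρ ^ (-(2*p))) *
              (ENNReal.ofReal (ρ ^ ((N:ℝ) - a')) * Ma) := mul_le_mul_right (hMa ρ hρ0) _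
        _ = ENNReal.ofReal (K₁ * ma * ρ ^ e) := by
            rw [hMa', ← ENNReal.ofReal_mul (by positivity), ← ENNReal.ofReal_mul (by positivity)]
            congr 1
            have hcomb : ρ ^ (-(2*p)) * ρ ^ ((N:ℝ) - a') = ρ ^ e := by
              rw [← Real.rpow_add hρ0]; congr 1; rw [hedef]; ring
            calc K₁ * ρ ^ (-(2*p)) * (ρ ^ ((N:ℝ) - a') * ma)
                = K₁ * (ρ ^ (-(2*p)) * ρ ^ ((N:ℝ) - a')) * ma := by ring
              _ = K₁ * ma * ρ ^ e := by rw [hcomb]; ring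
    -- region 3
    have hS3 : ∫⁻ y in S₃, f y ≤ ENNReal.ofReal (K₁ * 4 ^ (2*p) * mc * ρ ^ e) := by
      have hgm : Measurable fun y : EuclideanSpace ℝ (Fin N) =>
          ENNReal.ofReal (K₁ * 4 ^ (2*p)) * ENNReal.ofReal (‖y‖ ^ (-(a' + 2*p))) :=
        measurable_const.mul (((measurable_rpow_c (-(a' + 2*p))).comp
          measurable_norm).ennreal_ofReal)
      have hpt : ∀ y ∈ S₃, f y ≤
          ENNReal.ofReal (K₁ * 4 ^ (2*p)) * ENNReal.ofReal (‖y‖ ^ (-(a' + 2*p))) := by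
        intro y hy
        rw [hS₃def] at hy
        obtain ⟨hyM, hyout⟩ := hy
        rw [mem_ball_zero_iff] at hyM
        have hy1 : ρ ≤ ‖x - y‖ := by
          have hnm : y ∉ ball x ρ := fun h => hyout (Or.inl h)
          rw [mem_ball_iff_norm, not_lt, norm_sub_rev] at hnm
          exact hnm
        have hy2 : ρ ≤ ‖y‖ := by
          have hnm : y ∉ ball (0 : EuclideanSpace ℝ (Fin N)) ρ := fun h => hyout (Or.inr h)
          rwa [mem_ball_zero_iff, not_lt] at hnm
        have hy0' : 0 < ‖y‖ := lt_of_lt_of_le hρ0 hy2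
        have hy4 : ‖y‖ / 4 ≤ ‖x - y‖ := by
          by_cases hcase : ‖y‖ ≤ 2 * ‖x‖
          · rw [hρdef] at hy1; linarith
          · push_neg at hcase
            have h2 := norm_sub_norm_le y x
            rw [norm_sub_rev y x] at h2
            linarith
        have hbound2 : ‖x - y‖ ^ (-(2*p)) ≤ (‖y‖ / 4) ^ (-(2*p)) :=
          Real.rpow_le_rpow_of_nonpos (by linarith) hy4 (by linarith)
        have h44 : (‖y‖ / 4) ^ (-(2*p)) = 4 ^ (2*p) * ‖y‖ ^ (-(2*p)) := by
          rw [div_eq_mul_inv, Real.mul_rpow (norm_nonneg y) (by norm_num),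
            Real.inv_rpow (by norm_num : (0:ℝ) ≤ 4),
            ← Real.rpow_neg (by norm_num : (0:ℝ) ≤ 4), neg_neg]
          ring
        have hbound1 : u y ^ p ≤ K₁ * ‖y‖ ^ (-a') := hK y hy0' hyM.le
        have hcomb : ‖y‖ ^ (-a') * ‖y‖ ^ (-(2*p)) = ‖y‖ ^ (-(a' + 2*p)) := by
          rw [← Real.rpow_add hy0']; congr 1; ring
        have hreal : u y ^ p * (‖x - y‖ ^ (2*p))⁻¹ ≤
            K₁ * 4 ^ (2*p) * ‖y‖ ^ (-(a' + 2*p)) := by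
          calc u y ^ p * (‖x - y‖ ^ (2*p))⁻¹
              = u y ^ p * ‖x - y‖ ^ (-(2*p)) := by
                rw [← Real.rpow_neg (norm_nonneg _)]
            _ ≤ (K₁ * ‖y‖ ^ (-a')) * (4 ^ (2*p) * ‖y‖ ^ (-(2*p))) := by
                refine mul_le_mul hbound1 (hbound2.trans_eq h44)
                  (Real.rpow_nonneg (norm_nonneg _) _)
                  (mul_nonneg hK₁0.le (Real.rpow_nonneg (norm_nonneg _) _))
            _ = K₁ * 4 ^ (2*p) * (‖y‖ ^ (-a') * ‖y‖ ^ (-(2*p))) := by ring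
            _ = K₁ * 4 ^ (2*p) * ‖y‖ ^ (-(a' + 2*p)) := by rw [hcomb]
        rw [hfdef]
        simp only []
        rw [div_eq_mul_inv]
        refine (ENNReal.ofReal_le_ofReal hreal).trans (le_of_eq ?_)
        rw [ENNReal.ofReal_mul (mul_nonneg hK₁0.le h4p.le)]
      have hsub : S₃ ⊆ (ball (0 : EuclideanSpace ℝ (Fin N)) ρ)ᶜ := by
        intro y hy
        exact fun h => hy.2 (Or.inr h)
      calc ∫⁻ y in S₃, f y
          ≤ ∫⁻ y in S₃, ENNReal.ofReal (K₁ * 4 ^ (2*p)) *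
              ENNReal.ofReal (‖y‖ ^ (-(a' + 2*p))) := setLIntegral_mono hgm hpt
        _ ≤ ∫⁻ y in (ball (0 : EuclideanSpace ℝ (Fin N)) ρ)ᶜ,
              ENNReal.ofReal (K₁ * 4 ^ (2*p)) * ENNReal.ofReal (‖y‖ ^ (-(a' + 2*p))) :=
            lintegral_mono_set hsub
        _ = ENNReal.ofReal (K₁ * 4 ^ (2*p)) *
              ∫⁻ y in (ball (0 : EuclideanSpace ℝ (Fin N)) ρ)ᶜ,
                ENNReal.ofReal (‖y‖ ^ (-(a' + 2*p))) :=
            lintegral_const_mul _ (((measurable_rpow_c (-(a' + 2*p))).comp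
              measurable_norm).ennreal_ofReal)
        _ ≤ ENNReal.ofReal (K₁ * 4 ^ (2*p)) *
              (ENNReal.ofReal (ρ ^ ((N:ℝ) - (a' + 2*p))) * Mc) :=
            mul_le_mul_right (hMc ρ hρ0) _
        _ = ENNReal.ofReal (K₁ * 4 ^ (2*p) * mc * ρ ^ e) := by
            rw [hMc', ← ENNReal.ofReal_mul (by positivity), ← ENNReal.ofReal_mul (by positivity)]
            congr 1
            have hcomb : ((N:ℝ) - (a' + 2*p)) = e := by rw [hedef]; ring
            rw [hcomb]
            ring
    -- region 4
    have hS4 : ∫⁻ y in (ball (0 : EuclideanSpace ℝ (Fin N)) M)ᶜ, f y ≤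
        ENNReal.ofReal D4 := by
      have hgm : Measurable fun y : EuclideanSpace ℝ (Fin N) =>
          ENNReal.ofReal (C₀ ^ p * 2 ^ (2*p)) * ENNReal.ofReal (‖y‖ ^ (-(γ₂*p + 2*p))) :=
        measurable_const.mul (((measurable_rpow_c (-(γ₂*p + 2*p))).comp
          measurable_norm).ennreal_ofReal)
      have hC₀p : (0:ℝ) < C₀ ^ p := Real.rpow_pos_of_pos hC₀ _
      have hpt : ∀ y ∈ (ball (0 : EuclideanSpace ℝ (Fin N)) M)ᶜ, f y ≤
          ENNReal.ofReal (C₀ ^ p * 2 ^ (2*p)) * ENNReal.ofReal (‖y‖ ^ (-(γ₂*p + 2*p))) := by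
        intro y hy
        rw [Set.mem_compl_iff, mem_ball_zero_iff, not_lt] at hy
        have hy0' : 0 < ‖y‖ := lt_of_lt_of_le hM0 hy
        have hy2 : ‖y‖ / 2 ≤ ‖x - y‖ := by
          have h2 := norm_sub_norm_le y x
          rw [norm_sub_rev y x] at h2
          have hxR' : ‖x‖ ≤ R' := le_trans hxR hRR'
          rw [hMdef] at hy
          linarith
        have hbound2 : ‖x - y‖ ^ (-(2*p)) ≤ (‖y‖ / 2) ^ (-(2*p)) :=
          Real.rpow_le_rpow_of_nonpos (by linarith) hy2 (by linarith)
        have h22 : (‖y‖ / 2) ^ (-(2*p)) = 2 ^ (2*p) * ‖y‖ ^ (-(2*p)) := by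
          rw [div_eq_mul_inv, Real.mul_rpow (norm_nonneg y) (by norm_num),
            Real.inv_rpow (by norm_num : (0:ℝ) ≤ 2),
            ← Real.rpow_neg (by norm_num : (0:ℝ) ≤ 2), neg_neg]
          ring
        have hbound1 : u y ^ p ≤ C₀ ^ p * ‖y‖ ^ (-(γ₂ * p)) := hK2 y hy
        have hcomb : ‖y‖ ^ (-(γ₂*p)) * ‖y‖ ^ (-(2*p)) = ‖y‖ ^ (-(γ₂*p + 2*p)) := by
          rw [← Real.rpow_add hy0']; congr 1; ring
        have hreal : u y ^ p * (‖x - y‖ ^ (2*p))⁻¹ ≤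
            C₀ ^ p * 2 ^ (2*p) * ‖y‖ ^ (-(γ₂*p + 2*p)) := by
          calc u y ^ p * (‖x - y‖ ^ (2*p))⁻¹
              = u y ^ p * ‖x - y‖ ^ (-(2*p)) := by
                rw [← Real.rpow_neg (norm_nonneg _)]
            _ ≤ (C₀ ^ p * ‖y‖ ^ (-(γ₂*p))) * (2 ^ (2*p) * ‖y‖ ^ (-(2*p))) := by
                refine mul_le_mul hbound1 (hbound2.trans_eq h22)
                  (Real.rpow_nonneg (norm_nonneg _) _)
                  (mul_nonneg hC₀p.le (Real.rpow_nonneg (norm_nonneg _) _))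
            _ = C₀ ^ p * 2 ^ (2*p) * (‖y‖ ^ (-(γ₂*p)) * ‖y‖ ^ (-(2*p))) := by ring
            _ = C₀ ^ p * 2 ^ (2*p) * ‖y‖ ^ (-(γ₂*p + 2*p)) := by rw [hcomb]
        rw [hfdef]
        simp only []
        rw [div_eq_mul_inv]
        refine (ENNReal.ofReal_le_ofReal hreal).trans (le_of_eq ?_)
        rw [ENNReal.ofReal_mul (mul_nonneg hC₀p.le h2p2.le)]
      calc ∫⁻ y in (ball (0 : EuclideanSpace ℝ (Fin N)) M)ᶜ, f y
          ≤ ∫⁻ y in (ball (0 : EuclideanSpace ℝ (Fin N)) M)ᶜ,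
              ENNReal.ofReal (C₀ ^ p * 2 ^ (2*p)) *
                ENNReal.ofReal (‖y‖ ^ (-(γ₂*p + 2*p))) := setLIntegral_mono hgm hpt
        _ = ENNReal.ofReal (C₀ ^ p * 2 ^ (2*p)) *
              ∫⁻ y in (ball (0 : EuclideanSpace ℝ (Fin N)) M)ᶜ,
                ENNReal.ofReal (‖y‖ ^ (-(γ₂*p + 2*p))) :=
            lintegral_const_mul _ (((measurable_rpow_c (-(γ₂*p + 2*p))).comp
              measurable_norm).ennreal_ofReal)
        _ ≤ ENNReal.ofReal (C₀ ^ p * 2 ^ (2*p)) *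
              (ENNReal.ofReal (M ^ ((N:ℝ) - (γ₂*p + 2*p))) * Md) :=
            mul_le_mul_right (hMd M hM0) _
        _ = ENNReal.ofReal D4 := by
            rw [hMd', ← ENNReal.ofReal_mul (by positivity), ← ENNReal.ofReal_mul (by positivity)]
            congr 1
            rw [hD4def]; ring
    -- assemble
    have hcover : (Set.univ : Set (EuclideanSpace ℝ (Fin N))) ⊆
        ball x ρ ∪ (ball (0 : EuclideanSpace ℝ (Fin N)) ρ ∪
          (S₃ ∪ (ball (0 : EuclideanSpace ℝ (Fin N)) M)ᶜ)) := by
      intro y _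
      by_cases h1 : y ∈ ball x ρ
      · exact Or.inl h1
      by_cases h2 : y ∈ ball (0 : EuclideanSpace ℝ (Fin N)) ρ
      · exact Or.inr (Or.inl h2)
      by_cases h3 : y ∈ ball (0 : EuclideanSpace ℝ (Fin N)) M
      · refine Or.inr (Or.inr (Or.inl ?_))
        rw [hS₃def]
        exact ⟨h3, fun hmem => hmem.elim h1 h2⟩
      · exact Or.inr (Or.inr (Or.inr h3))
    have hρe : ρ ^ e ≤ 2 ^ p * R' ^ (p + e) * ‖x‖ ^ (-p) := by
      have h1 : ρ ^ e = ρ ^ (-p) * ρ ^ (p + e) := by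
        rw [← Real.rpow_add hρ0]; congr 1; ring
      have h2 : ρ ^ (p + e) ≤ R' ^ (p + e) := Real.rpow_le_rpow hρ0.le hρR' (by linarith)
      have h3 : ρ ^ (-p) = 2 ^ p * ‖x‖ ^ (-p) := by
        rw [hρdef, div_eq_mul_inv, Real.mul_rpow (norm_nonneg x) (by norm_num),
          Real.inv_rpow (by norm_num : (0:ℝ) ≤ 2),
          ← Real.rpow_neg (by norm_num : (0:ℝ) ≤ 2), neg_neg]
        ring
      have h4 : (0:ℝ) ≤ 2 ^ p * ‖x‖ ^ (-p) :=
        mul_nonneg h2p0.le (Real.rpow_nonneg (norm_nonneg x) _)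
      calc ρ ^ e = 2 ^ p * ‖x‖ ^ (-p) * ρ ^ (p + e) := by rw [h1, h3]
        _ ≤ 2 ^ p * ‖x‖ ^ (-p) * R' ^ (p + e) := mul_le_mul_of_nonneg_left h2 h4
        _ = 2 ^ p * R' ^ (p + e) * ‖x‖ ^ (-p) := by ring
    have hmax1 : ‖x‖ ^ (-p) ≤ max (‖x‖ ^ (-p)) 1 := le_max_left _ _
    have hmax2 : (1:ℝ) ≤ max (‖x‖ ^ (-p)) 1 := le_max_right _ _
    have hfin : G * ρ ^ e + D4 ≤ C₂ * max (‖x‖ ^ (-p)) 1 := by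
      have hc : (0:ℝ) ≤ 2 ^ p * R' ^ (p + e) :=
        mul_nonneg h2p0.le (Real.rpow_pos_of_pos hR'0 _).le
      have hA2 := mul_le_mul_of_nonneg_left hmax1 (mul_nonneg hG0 hc)
      have hB2 : D4 ≤ (D4 + 1) * max (‖x‖ ^ (-p)) 1 := by
        have hh := mul_le_mul_of_nonneg_left hmax2 (by linarith : (0:ℝ) ≤ D4 + 1)
        rw [mul_one] at hh
        linarith
      calc G * ρ ^ e + D4 ≤ G * (2 ^ p * R' ^ (p + e) * ‖x‖ ^ (-p)) + D4 := by
            have := mul_le_mul_of_nonneg_left hρe hG0; linarith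
        _ = G * (2 ^ p * R' ^ (p + e)) * ‖x‖ ^ (-p) + D4 := by ring
        _ ≤ G * (2 ^ p * R' ^ (p + e)) * max (‖x‖ ^ (-p)) 1 +
              (D4 + 1) * max (‖x‖ ^ (-p)) 1 := add_le_add hA2 hB2
        _ = C₂ * max (‖x‖ ^ (-p)) 1 := by rw [hC₂def]; ring
    have hb1 : (0:ℝ) ≤ K₁ * mb * ρ ^ e := mul_nonneg (mul_nonneg hK₁0.le hmb0) hρe0
    have hb2 : (0:ℝ) ≤ K₁ * ma * ρ ^ e := mul_nonneg (mul_nonneg hK₁0.le hma0) hρe0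
    have hb3 : (0:ℝ) ≤ K₁ * 4 ^ (2*p) * mc * ρ ^ e :=
      mul_nonneg (mul_nonneg (mul_nonneg hK₁0.le h4p.le) hmc0) hρe0
    calc ∫⁻ y, f y = ∫⁻ y in Set.univ, f y := (setLIntegral_univ f).symm
      _ ≤ ∫⁻ y in ball x ρ ∪ (ball (0 : EuclideanSpace ℝ (Fin N)) ρ ∪
            (S₃ ∪ (ball (0 : EuclideanSpace ℝ (Fin N)) M)ᶜ)), f y :=
          lintegral_mono_set hcover
      _ ≤ ENNReal.ofReal (K₁ * mb * ρ ^ e) + (ENNReal.ofReal (K₁ * ma * ρ ^ e) +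
            (ENNReal.ofReal (K₁ * 4 ^ (2*p) * mc * ρ ^ e) + ENNReal.ofReal D4)) := by
          refine le_trans (lintegral_union_le _ _ _) (add_le_add hS1 ?_)
          refine le_trans (lintegral_union_le _ _ _) (add_le_add hS2 ?_)
          exact le_trans (lintegral_union_le _ _ _) (add_le_add hS3 hS4)
      _ = ENNReal.ofReal (K₁ * mb * ρ ^ e + (K₁ * ma * ρ ^ e +
            (K₁ * 4 ^ (2*p) * mc * ρ ^ e + D4))) := by
          rw [← ENNReal.ofReal_add hb3 hD40, ← ENNReal.ofReal_add hb2 (by linarith),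
            ← ENNReal.ofReal_add hb1 (by linarith)]
      _ ≤ ENNReal.ofReal (C₂ * max (‖x‖ ^ (-p)) 1) := by
          refine ENNReal.ofReal_le_ofReal (le_trans (le_of_eq ?_) hfin)
          rw [hGdef]; ring
end

section
/- Let N ≥ 3, 1 < p < N/2 and 0 < l < p, and set p⋆ = Np/(N−p). There exists a constant C = C(N,p,l) > 0 such that for every R > 0 and every measurable u : ℝ^N → [0,∞) with u ∈ L^{p⋆}(ℝ^N), one has ( ∫_{B_{6R}∖B_{2R}} ( ∫_{B_{R/8}} u(z)^p/|x−z|^{2p} dz )^{N/(p−l)} dx )^{(p−l)/N} ≤ C · R^{−l} · ‖u‖_{L^{p⋆}(ℝ^N)}^{p}. -/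
open MeasureTheory
open scoped ENNReal

/-- Estimate (3.53) in the proof of Lemma 3.9: the `L^{N/(p-l)}` norm on the annulus
`B_{6R} ∖ B_{2R}` of the truncated Riesz potential `∫_{B_{R/8}} u(z)^p/|x-z|^{2p} dz`
is at most `C R^{-l} ‖u‖_{L^{p⋆}}^p`, with `C = C(N,p,l)`. -/
theorem stmt_19 (N : ℕ) (hN : 3 ≤ N) (p l : ℝ) (hp1 : 1 < p) (hpN : p < (N : ℝ) / 2)
    (hl0 : 0 < l) (hlp : l < p) :
    ∃ C : ℝ, 0 < C ∧ ∀ R : ℝ, 0 < R →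
      ∀ u : EuclideanSpace ℝ (Fin N) → ℝ, Measurable u → (∀ y, 0 ≤ u y) →
      (∫⁻ x, ENNReal.ofReal (u x ^ ((N : ℝ) * p / ((N : ℝ) - p)))) < ⊤ →
      (∫⁻ x in Metric.ball (0 : EuclideanSpace ℝ (Fin N)) (6 * R) \ Metric.ball 0 (2 * R),
          (∫⁻ z in Metric.ball (0 : EuclideanSpace ℝ (Fin N)) (R / 8),
            ENNReal.ofReal (u z ^ p / ‖x - z‖ ^ (2 * p))) ^ ((N : ℝ) / (p - l))) ^
          ((p - l) / (N : ℝ)) ≤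
        ENNReal.ofReal (C * R ^ (-l)) *
          ((∫⁻ x, ENNReal.ofReal (u x ^ ((N : ℝ) * p / ((N : ℝ) - p)))) ^
            (((N : ℝ) - p) / ((N : ℝ) * p))) ^ p := by
  haveI : Nonempty (Fin N) := ⟨⟨0, by omega⟩⟩
  have hN3 : (3 : ℝ) ≤ (N : ℝ) := by exact_mod_cast hN
  have hN0 : (0 : ℝ) < N := by linarith
  have hp0 : (0 : ℝ) < p := by linarith
  have hpltN : p < N := by linarith [hpN]
  have hNp : (0 : ℝ) < (N : ℝ) - p := by linarith
  have hpl : (0 : ℝ) < p - l := by linarith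
  set m : ℝ≥0∞ := volume (Metric.ball (0 : EuclideanSpace ℝ (Fin N)) 1) with hm
  have hm0 : m ≠ 0 := (Metric.measure_ball_pos volume 0 one_pos).ne'
  have hmtop : m ≠ ⊤ := measure_ball_lt_top.ne
  have hmR : 0 < m.toReal := ENNReal.toReal_pos hm0 hmtop
  refine ⟨6 ^ (2 * p - l) * m.toReal ^ ((2 * p - l) / (N : ℝ)), by positivity, ?_⟩
  intro R hR u hu hu0 hJ
  set ps : ℝ := (N : ℝ) * p / ((N : ℝ) - p) with hps
  set J := ∫⁻ x, ENNReal.ofReal (u x ^ ps) with hJdef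
  set A := Metric.ball (0 : EuclideanSpace ℝ (Fin N)) (6 * R) \ Metric.ball 0 (2 * R) with hA
  set B := Metric.ball (0 : EuclideanSpace ℝ (Fin N)) (R / 8) with hB
  set M := volume (Metric.ball (0 : EuclideanSpace ℝ (Fin N)) (6 * R)) with hM
  have hM0 : M ≠ 0 := (Metric.measure_ball_pos volume 0 (by positivity)).ne'
  have hMtop : M ≠ ⊤ := measure_ball_lt_top.ne
  set K := ENNReal.ofReal (R ^ (-(2 * p))) *
    (J ^ (((N : ℝ) - p) / (N : ℝ)) * (volume B) ^ (p / (N : ℝ))) with hK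
  have hPQ : ((N : ℝ) / ((N : ℝ) - p)).HolderConjugate ((N : ℝ) / p) := by
    rw [Real.holderConjugate_iff]
    constructor
    · rw [lt_div_iff₀ hNp]; linarith
    · rw [inv_div, inv_div, ← add_div]; field_simp; ring
  -- inner bound
  have key : ∀ x : EuclideanSpace ℝ (Fin N), x ∈ A →
      (∫⁻ z in B, ENNReal.ofReal (u z ^ p / ‖x - z‖ ^ (2 * p))) ≤ K := by
    intro x hx
    have hxnorm : 2 * R ≤ ‖x‖ := by
      have := hx.2
      simpa [Metric.mem_ball, dist_zero_right, not_lt] using this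
    have step1 : (∫⁻ z in B, ENNReal.ofReal (u z ^ p / ‖x - z‖ ^ (2 * p)))
        ≤ ∫⁻ z in B, ENNReal.ofReal (u z ^ p) * ENNReal.ofReal (R ^ (-(2 * p))) := by
      refine setLIntegral_mono' measurableSet_ball (fun z hz => ?_)
      have hz' : ‖z‖ < R / 8 := by simpa [hB, Metric.mem_ball, dist_zero_right] using hz
      have hdist : R ≤ ‖x - z‖ := by
        have h1 : ‖x‖ - ‖z‖ ≤ ‖x - z‖ := norm_sub_norm_le x z
        linarith
      rw [← ENNReal.ofReal_mul (Real.rpow_nonneg (hu0 z) p)]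
      apply ENNReal.ofReal_le_ofReal
      rw [Real.rpow_neg hR.le, ← div_eq_mul_inv]
      exact div_le_div_of_nonneg_left (Real.rpow_nonneg (hu0 z) p)
        (Real.rpow_pos_of_pos hR _) (Real.rpow_le_rpow hR.le hdist (by positivity))
    have step2 : (∫⁻ z in B, ENNReal.ofReal (u z ^ p) * ENNReal.ofReal (R ^ (-(2 * p))))
        = (∫⁻ z in B, ENNReal.ofReal (u z ^ p)) * ENNReal.ofReal (R ^ (-(2 * p))) :=
      lintegral_mul_const _ ((hu.pow_const p).ennreal_ofReal)
    have step3 : (∫⁻ z in B, ENNReal.ofReal (u z ^ p))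
        ≤ J ^ (((N : ℝ) - p) / (N : ℝ)) * (volume B) ^ (p / (N : ℝ)) := by
      have hexp : p * ((N : ℝ) / ((N : ℝ) - p)) = ps := by rw [hps]; field_simp
      have h := ENNReal.lintegral_mul_le_Lp_mul_Lq (volume.restrict B) hPQ
        (f := fun z => ENNReal.ofReal (u z ^ p)) (g := fun _ => 1)
        ((hu.pow_const p).ennreal_ofReal).aemeasurable aemeasurable_const
      simp only [Pi.mul_apply, mul_one, ENNReal.one_rpow, lintegral_one,
        Measure.restrict_apply MeasurableSet.univ, Set.univ_inter, one_div, inv_div] at h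
      refine h.trans (mul_le_mul_left (ENNReal.rpow_le_rpow ?_ (by positivity)) _)
      calc (∫⁻ z in B, ENNReal.ofReal (u z ^ p) ^ ((N : ℝ) / ((N : ℝ) - p)))
          = ∫⁻ z in B, ENNReal.ofReal (u z ^ ps) := by
            refine lintegral_congr fun z => ?_
            rw [ENNReal.ofReal_rpow_of_nonneg (Real.rpow_nonneg (hu0 z) p) (by positivity),
              ← Real.rpow_mul (hu0 z), hexp]
        _ ≤ J := setLIntegral_le_lintegral _ _
    calc (∫⁻ z in B, ENNReal.ofReal (u z ^ p / ‖x - z‖ ^ (2 * p)))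
        ≤ (∫⁻ z in B, ENNReal.ofReal (u z ^ p)) * ENNReal.ofReal (R ^ (-(2 * p))) :=
          step1.trans_eq step2
      _ ≤ (J ^ (((N : ℝ) - p) / (N : ℝ)) * (volume B) ^ (p / (N : ℝ)))
            * ENNReal.ofReal (R ^ (-(2 * p))) := mul_le_mul_left step3 _
      _ = K := by rw [hK, mul_comm]
  -- outer bound
  have houter : (∫⁻ x in A, (∫⁻ z in B,
        ENNReal.ofReal (u z ^ p / ‖x - z‖ ^ (2 * p))) ^ ((N : ℝ) / (p - l)))
      ≤ K ^ ((N : ℝ) / (p - l)) * M := by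
    calc (∫⁻ x in A, (∫⁻ z in B,
          ENNReal.ofReal (u z ^ p / ‖x - z‖ ^ (2 * p))) ^ ((N : ℝ) / (p - l)))
        ≤ ∫⁻ _ in A, K ^ ((N : ℝ) / (p - l)) :=
          setLIntegral_mono' (measurableSet_ball.diff measurableSet_ball)
            (fun x hx => ENNReal.rpow_le_rpow (key x hx) (by positivity))
      _ = K ^ ((N : ℝ) / (p - l)) * volume A := setLIntegral_const _ _
      _ ≤ K ^ ((N : ℝ) / (p - l)) * M := mul_le_mul_right (measure_mono Set.diff_subset) _
  have hone : ((N : ℝ) / (p - l)) * ((p - l) / (N : ℝ)) = 1 := by field_simp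
  have hMval : M = ENNReal.ofReal ((6 * R) ^ N) * m := by
    rw [hM, hm, Measure.addHaar_ball volume _ (by positivity : (0 : ℝ) ≤ 6 * R),
      finrank_euclideanSpace_fin]
  have hMsum : M ^ (p / (N : ℝ)) * M ^ ((p - l) / (N : ℝ)) = M ^ ((2 * p - l) / (N : ℝ)) := by
    rw [← ENNReal.rpow_add _ _ hM0 hMtop]; congr 1; ring
  have hRp : R ^ (-(2 * p)) * R ^ (2 * p - l) = R ^ (-l) := by
    rw [← Real.rpow_add hR]; congr 1; ring
  have hs : (0:ℝ) ≤ (2 * p - l) / (N : ℝ) := div_nonneg (by linarith) hN0.le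
  have h6R : (0:ℝ) ≤ (6 * R) ^ N := pow_nonneg (by linarith) N
  have hscal : ENNReal.ofReal (R ^ (-(2 * p))) * M ^ ((2 * p - l) / (N : ℝ))
      = ENNReal.ofReal ((6 ^ (2 * p - l) * m.toReal ^ ((2 * p - l) / (N : ℝ))) * R ^ (-l)) := by
    have hmrpow : m ^ ((2 * p - l) / (N : ℝ))
        = ENNReal.ofReal (m.toReal ^ ((2 * p - l) / (N : ℝ))) := by
      nth_rewrite 1 [← ENNReal.ofReal_toReal hmtop]
      rw [ENNReal.ofReal_rpow_of_nonneg ENNReal.toReal_nonneg hs]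
    rw [hMval, ENNReal.mul_rpow_of_nonneg _ _ hs,
      ENNReal.ofReal_rpow_of_nonneg h6R hs, hmrpow,
      ← ENNReal.ofReal_mul (Real.rpow_nonneg h6R _),
      ← ENNReal.ofReal_mul (Real.rpow_nonneg hR.le _)]
    congr 1
    rw [← Real.rpow_natCast (6 * R) N, ← Real.rpow_mul (by linarith : (0:ℝ) ≤ 6 * R),
      show (N : ℝ) * ((2 * p - l) / (N : ℝ)) = 2 * p - l by field_simp,
      Real.mul_rpow (by norm_num) hR.le]
    linear_combination (6 ^ (2 * p - l) * m.toReal ^ ((2 * p - l) / (N : ℝ))) * hRp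
  have hJpow : (J ^ (((N : ℝ) - p) / ((N : ℝ) * p))) ^ p = J ^ (((N : ℝ) - p) / (N : ℝ)) := by
    rw [← ENNReal.rpow_mul]; congr 1; field_simp
  calc (∫⁻ x in A, (∫⁻ z in B,
        ENNReal.ofReal (u z ^ p / ‖x - z‖ ^ (2 * p))) ^ ((N : ℝ) / (p - l))) ^ ((p - l) / (N : ℝ))
      ≤ (K ^ ((N : ℝ) / (p - l)) * M) ^ ((p - l) / (N : ℝ)) :=
        ENNReal.rpow_le_rpow houter (by positivity)
    _ = K * M ^ ((p - l) / (N : ℝ)) := by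
        rw [ENNReal.mul_rpow_of_nonneg _ _ (by positivity), ← ENNReal.rpow_mul, hone,
          ENNReal.rpow_one]
    _ ≤ (ENNReal.ofReal (R ^ (-(2 * p))) *
          (J ^ (((N : ℝ) - p) / (N : ℝ)) * M ^ (p / (N : ℝ)))) * M ^ ((p - l) / (N : ℝ)) := by
        rw [hK]
        gcongr
        exact measure_mono (Metric.ball_subset_ball (by linarith))
    _ = (ENNReal.ofReal (R ^ (-(2 * p))) * (M ^ (p / (N : ℝ)) * M ^ ((p - l) / (N : ℝ))))
          * J ^ (((N : ℝ) - p) / (N : ℝ)) := by ring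
    _ = ENNReal.ofReal ((6 ^ (2 * p - l) * m.toReal ^ ((2 * p - l) / (N : ℝ))) * R ^ (-l))
          * J ^ (((N : ℝ) - p) / (N : ℝ)) := by rw [hMsum, hscal]
    _ = ENNReal.ofReal ((6 ^ (2 * p - l) * m.toReal ^ ((2 * p - l) / (N : ℝ))) * R ^ (-l))
          * (J ^ (((N : ℝ) - p) / ((N : ℝ) * p))) ^ p := by rw [hJpow]
end
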